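/- arXiv:math/0208163 — 5 statements merged into one kernel-verified Lean document; each statement's English description precedes it below -/
import Mathlib

section
/- Let B be a k-algebra, A a subalgebra of B, and x an element of B such that B is generated as an algebra by A and x. Suppose there exists a finite-dimensional subspace V of A that generates A as an algebra and satisfies xV ⊆ Vx + A. Then GKdim(B) ≤ GKdim(A) + 1. -/
noncomputable section
open scoped BigOperators ENNReal NNReal

/-- The Gelfand–Kirillov dimension of a `k`-algebra `A`, defined as the supremum over
finitely generated (equivalently, finite-dimensional) subspaces `V` of
`limsup_n log_n dim V^n`. -/
noncomputable def GKdim (k A : Type*) [Field k] [Ring A] [Algebra k A] : ℝ≥0∞ :=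
  ⨆ (V : Submodule k A) (_ : V.FG),
    Filter.limsup (fun n : ℕ =>
      ENNReal.ofReal (Real.logb n (Module.finrank k ↥(V ^ n)))) Filter.atTop

section Aux

open Submodule Filter Real

theorem GK_logb_nat_nonneg (m n : ℕ) : 0 ≤ Real.logb m n := by
  unfold Real.logb
  exact div_nonneg (Real.log_natCast_nonneg n) (Real.log_natCast_nonneg m)

set_option maxHeartbeats 1000000 in
theorem GK_analysis_aux (dd DD : ℕ → ℕ) (K N : ℕ) (hK : 1 ≤ K) (hd : ∀ m, 1 ≤ dd m)
    (hD : ∀ n, DD n ≤ (N * n + 1) * dd (K * n)) (L : ℝ≥0∞)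
    (hL : Filter.limsup (fun m : ℕ => ENNReal.ofReal (Real.logb m (dd m))) Filter.atTop ≤ L) :
    Filter.limsup (fun n : ℕ => ENNReal.ofReal (Real.logb n (DD n))) Filter.atTop ≤ L + 1 := by
  rcases eq_top_or_lt_top L with hLtop | hLfin
  · simp [hLtop]
  apply ENNReal.le_of_forall_pos_le_add
  intro ε hε _
  set e : ℝ := (ε : ℝ) with he
  have he0 : (0:ℝ) < e := hε
  set l : ℝ := L.toReal with hl
  have hl0 : 0 ≤ l := ENNReal.toReal_nonneg
  have hofl : ENNReal.ofReal l = L := ENNReal.ofReal_toReal hLfin.ne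
  have hofe : ENNReal.ofReal e = (ε : ℝ≥0∞) := ENNReal.ofReal_coe_nnreal
  clear_value e l
  have h1 : Filter.limsup (fun m : ℕ => ENNReal.ofReal (Real.logb m (dd m))) Filter.atTop
      < L + ENNReal.ofReal (e/4) :=
    lt_of_le_of_lt hL (ENNReal.lt_add_right hLfin.ne (by simp [ENNReal.ofReal_pos]; positivity))
  have h2 := Filter.eventually_lt_of_limsup_lt h1
  have h3 : ∀ᶠ m : ℕ in atTop, Real.logb m (dd m) ≤ l + e/4 := by
    filter_upwards [h2] with m hm
    have hne : L + ENNReal.ofReal (e/4) ≠ ⊤ := by simp [hLfin.ne]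
    have h4 := (ENNReal.ofReal_lt_iff_lt_toReal (GK_logb_nat_nonneg _ _) hne).1 hm
    rw [ENNReal.toReal_add hLfin.ne ENNReal.ofReal_ne_top,
      ENNReal.toReal_ofReal (by positivity)] at h4
    rw [hl]
    exact h4.le
  obtain ⟨m₀, hm₀⟩ := eventually_atTop.1 h3
  set δ : ℝ := (e/4) / (l + e/4 + 1) with hδ
  have hδ0 : 0 < δ := by rw [hδ]; positivity
  clear_value δ
  have hlog : Tendsto (fun n : ℕ => Real.log n) atTop atTop :=
    Real.tendsto_log_atTop.comp tendsto_natCast_atTop_atTop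
  have hev1 : ∀ᶠ n : ℕ in atTop, Real.log ((N:ℝ)+1) / (e/4) ≤ Real.log n :=
    hlog.eventually_ge_atTop _
  have hev2 : ∀ᶠ n : ℕ in atTop, Real.log K / δ ≤ Real.log n :=
    hlog.eventually_ge_atTop _
  apply Filter.limsup_le_of_le (by isBoundedDefault)
  filter_upwards [hev1, hev2, eventually_ge_atTop 2, eventually_ge_atTop m₀] with n H1 H2 H3 H4
  suffices hr : Real.logb n (DD n) ≤ l + 1 + e by
    calc ENNReal.ofReal (Real.logb n (DD n)) ≤ ENNReal.ofReal (l + 1 + e) :=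
          ENNReal.ofReal_le_ofReal hr
      _ = ENNReal.ofReal l + ENNReal.ofReal 1 + ENNReal.ofReal e := by
          rw [ENNReal.ofReal_add (by positivity) (by positivity),
            ENNReal.ofReal_add hl0 zero_le_one]
      _ = L + 1 + ε := by
          rw [hofl, ENNReal.ofReal_one, hofe]
  have hn1 : (1:ℝ) < n := by exact_mod_cast H3
  have hn0 : (0:ℝ) < n := by linarith
  have hlogn : 0 < Real.log n := Real.log_pos hn1
  have hKn : m₀ ≤ K * n := le_trans H4 (Nat.le_mul_of_pos_left n hK)
  have hdKn : Real.logb (K*n : ℕ) (dd (K*n)) ≤ l + e/4 := hm₀ _ hKn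
  by_cases hDD0 : DD n = 0
  · rw [hDD0]
    push_cast
    rw [Real.logb_zero]
    positivity
  have hD1 : (1:ℝ) ≤ (DD n : ℝ) := by exact_mod_cast Nat.one_le_iff_ne_zero.2 hDD0
  have hdd1 : (1:ℝ) ≤ (dd (K*n) : ℝ) := by exact_mod_cast hd (K*n)
  have hN0 : (0:ℝ) ≤ (N:ℝ) := Nat.cast_nonneg N
  have hDb : (DD n : ℝ) ≤ ((N:ℝ)+1) * n * dd (K*n) := by
    have h0 : (DD n : ℝ) ≤ ((N * n + 1 : ℕ) : ℝ) * dd (K*n) := by exact_mod_cast hD n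
    have h0' : ((N * n + 1 : ℕ) : ℝ) ≤ ((N:ℝ)+1) * n := by push_cast; nlinarith
    nlinarith
  have h5 : Real.logb n (DD n) ≤ Real.logb n (((N:ℝ)+1) * (n:ℝ) * (dd (K*n) : ℝ)) :=
    Real.logb_le_logb_of_le hn1 (by positivity) hDb
  have h6 : Real.logb n (((N:ℝ)+1) * (n:ℝ) * (dd (K*n):ℝ))
      = Real.logb n ((N:ℝ)+1) + Real.logb n (n:ℝ) + Real.logb n (dd (K*n)) := by
    rw [Real.logb_mul (by positivity) (by positivity),
      Real.logb_mul (by positivity) (by positivity)]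
  have h7 : Real.logb n (n:ℝ) = 1 := Real.logb_self_eq_one hn1
  have h8 : Real.logb n ((N:ℝ)+1) ≤ e/4 := by
    have hH1 := (div_le_iff₀ (by positivity : (0:ℝ) < e/4)).1 H1
    rw [Real.logb, div_le_iff₀ hlogn]
    linarith
  have hK0 : (0:ℝ) < (K:ℝ) := by exact_mod_cast hK
  have hlogK : 0 ≤ Real.log K := Real.log_natCast_nonneg K
  have hlogKn : Real.log ((K*n : ℕ) : ℝ) = Real.log K + Real.log n := by
    rw [Nat.cast_mul, Real.log_mul (ne_of_gt hK0) (ne_of_gt hn0)]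
  have hlogKn0 : 0 < Real.log ((K*n:ℕ):ℝ) := by rw [hlogKn]; linarith
  have h9 : Real.logb n (dd (K*n)) =
      Real.logb ((K*n:ℕ):ℝ) (dd (K*n)) * (Real.log ((K*n:ℕ):ℝ) / Real.log n) := by
    have hcast : ((K*n : ℕ) : ℝ) = (K:ℝ) * (n:ℝ) := by push_cast; ring
    have h' : 0 < Real.log ((K:ℝ)*(n:ℝ)) := hcast ▸ hlogKn0
    rw [Real.logb, Real.logb]
    field_simp
  have h10 : Real.log ((K*n:ℕ):ℝ) / Real.log n ≤ 1 + δ := by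
    have hH2 := (div_le_iff₀ hδ0).1 H2
    rw [hlogKn, div_le_iff₀ hlogn]
    nlinarith
  have h11 : 0 ≤ Real.logb ((K*n:ℕ):ℝ) (dd (K*n)) := GK_logb_nat_nonneg (K*n) (dd (K*n))
  have h12 : Real.logb n (dd (K*n)) ≤ (l + e/4) * (1 + δ) := by
    rw [h9]
    exact mul_le_mul hdKn h10 (by positivity) (by linarith)
  have h13 : (l + e/4) * (1 + δ) ≤ l + e/4 + e/4 := by
    have h14 : δ * (l + e/4 + 1) = e/4 := by
      rw [hδ]; field_simp
    nlinarith [hδ0.le]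
  calc Real.logb n (DD n) ≤ _ := h5
    _ = _ := h6
    _ ≤ e/4 + 1 + ((l + e/4) * (1+δ)) := by rw [h7]; linarith
    _ ≤ l + 1 + e := by linarith

variable {k B : Type*} [Field k] [Ring B] [Algebra k B]

theorem GK_exists_mem_pow {s : Set B} {T : Submodule k B} (hT1 : (1:Submodule k B) ≤ T)
    (hTs : s ⊆ (T : Set B)) {b : B} (hb : b ∈ Algebra.adjoin k s) : ∃ m : ℕ, b ∈ T ^ m := by
  induction hb using Algebra.adjoin_induction with
  | mem y hy => exact ⟨1, by simpa using hTs hy⟩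
  | algebraMap r => exact ⟨0, by rw [pow_zero]; exact Submodule.mem_one.2 ⟨r, rfl⟩⟩
  | add a b _ _ ha hb =>
    obtain ⟨m, hm⟩ := ha; obtain ⟨p, hp⟩ := hb
    exact ⟨max m p, add_mem (pow_le_pow_right' hT1 (le_max_left _ _) hm)
      (pow_le_pow_right' hT1 (le_max_right _ _) hp)⟩
  | mul a b _ _ ha hb =>
    obtain ⟨m, hm⟩ := ha; obtain ⟨p, hp⟩ := hb
    exact ⟨m + p, by rw [pow_add]; exact Submodule.mul_mem_mul hm hp⟩

theorem GK_mul_finset_sup_le {ι : Type*} {p q : Submodule k B} {s : Finset ι}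
    {f : ι → Submodule k B} (h : ∀ i ∈ s, p * f i ≤ q) : p * s.sup f ≤ q := by
  rw [Finset.sup_eq_iSup, Submodule.mul_iSup]
  refine iSup_le fun i => ?_
  rw [Submodule.mul_iSup]
  exact iSup_le fun hi => h i hi

theorem GK_key_XT {T X : Submodule k B} {M : ℕ} (hT1 : (1:Submodule k B) ≤ T)
    (hXT : X * T ≤ T * X + T ^ M) :
    ∀ m : ℕ, X * T ^ m ≤ T ^ m * X + T ^ (M + m)
  | 0 => by
    rw [pow_zero, mul_one, one_mul, Submodule.add_eq_sup]
    exact le_sup_left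
  | (m+1) => by
    have ih := GK_key_XT hT1 hXT m
    calc X * T ^ (m+1) = (X * T) * T ^ m := by rw [pow_succ', ← mul_assoc]
      _ ≤ (T * X + T ^ M) * T ^ m := mul_le_mul' hXT le_rfl
      _ = T * (X * T ^ m) + T ^ (M + m) := by rw [add_mul, mul_assoc, ← pow_add]
      _ ≤ T * (T ^ m * X + T ^ (M + m)) + T ^ (M + m) := by
          gcongr
      _ = T ^ (m+1) * X + (T ^ (M + m + 1) + T ^ (M + m)) := by
          rw [mul_add, ← mul_assoc, ← pow_succ', ← pow_succ', add_assoc]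
      _ ≤ T ^ (m+1) * X + T ^ (M + (m + 1)) := by
          gcongr
          rw [Submodule.add_eq_sup]
          exact sup_le (pow_le_pow_right' hT1 (by omega)) (pow_le_pow_right' hT1 (by omega))

theorem GK_key_U {T X : Submodule k B} {M : ℕ} (hT1 : (1:Submodule k B) ≤ T) (hM : 1 ≤ M)
    (hXT : X * T ≤ T * X + T ^ M) :
    ∀ n : ℕ, (T ⊔ X) ^ n ≤ (Finset.range (n+1)).sup (fun i => T ^ (M*n) * X ^ i)
  | 0 => by
    apply le_trans _ (Finset.le_sup (f := fun i => T ^ (M*0) * X ^ i)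
      (Finset.self_mem_range_succ 0))
    simp
  | (n+1) => by
    have ih := GK_key_U hT1 hM hXT n
    have hpow : ∀ {a b : ℕ}, a ≤ b → T ^ a ≤ T ^ b := fun h => pow_le_pow_right' hT1 h
    calc (T ⊔ X) ^ (n+1) = (T ⊔ X) * (T ⊔ X) ^ n := by rw [pow_succ']
      _ ≤ (T ⊔ X) * (Finset.range (n+1)).sup (fun i => T ^ (M*n) * X ^ i) :=
          mul_le_mul' le_rfl ih
      _ = T * (Finset.range (n+1)).sup (fun i => T ^ (M*n) * X ^ i)
          ⊔ X * (Finset.range (n+1)).sup (fun i => T ^ (M*n) * X ^ i) := Submodule.sup_mul _ _ _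
      _ ≤ (Finset.range (n+2)).sup (fun i => T ^ (M*(n+1)) * X ^ i) := by
          refine sup_le (GK_mul_finset_sup_le fun i hi => ?_)
            (GK_mul_finset_sup_le fun i hi => ?_)
          · have hi' : i < n + 1 := Finset.mem_range.1 hi
            calc T * (T ^ (M*n) * X ^ i) = T ^ (M*n+1) * X ^ i := by
                  rw [← mul_assoc, ← pow_succ']
              _ ≤ T ^ (M*(n+1)) * X ^ i :=
                  mul_le_mul' (hpow (show M*n+1 ≤ M*(n+1) by rw [Nat.mul_succ]; omega)) le_rfl
              _ ≤ _ := Finset.le_sup (f := fun j => T ^ (M*(n+1)) * X ^ j)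
                  (Finset.mem_range.2 (show i < n+2 by omega))
          · have hi' : i < n + 1 := Finset.mem_range.1 hi
            calc X * (T ^ (M*n) * X ^ i) = (X * T ^ (M*n)) * X ^ i := by rw [mul_assoc]
              _ ≤ (T ^ (M*n) * X + T ^ (M + M*n)) * X ^ i :=
                  mul_le_mul' (GK_key_XT hT1 hXT (M*n)) le_rfl
              _ = T ^ (M*n) * X ^ (i+1) + T ^ (M + M*n) * X ^ i := by
                  rw [add_mul, mul_assoc, ← pow_succ']
              _ ≤ (Finset.range (n+2)).sup (fun i => T ^ (M*(n+1)) * X ^ i) := by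
                  rw [Submodule.add_eq_sup]
                  refine sup_le ?_ ?_
                  · exact le_trans
                      (mul_le_mul' (hpow (show M*n ≤ M*(n+1) by rw [Nat.mul_succ]; omega)) le_rfl)
                      (Finset.le_sup (f := fun j => T ^ (M*(n+1)) * X ^ j)
                        (Finset.mem_range.2 (show i+1 < n+2 by omega)))
                  · exact le_trans
                      (mul_le_mul' (hpow (show M + M*n ≤ M*(n+1) by rw [Nat.mul_succ]; omega))
                        le_rfl)
                      (Finset.le_sup (f := fun j => T ^ (M*(n+1)) * X ^ j)
                        (Finset.mem_range.2 (show i < n+2 by omega)))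

theorem GK_finrank_finsetSup_le (s : Finset ℕ) (f : ℕ → Submodule k B) (hf : ∀ i, (f i).FG) :
    Module.finrank k ↥(s.sup f) ≤ ∑ i ∈ s, Module.finrank k ↥(f i) := by
  classical
  induction s using Finset.cons_induction with
  | empty => rw [Finset.sup_empty]; simp
  | cons a s ha ih =>
    rw [Finset.sup_cons, Finset.sum_cons]
    haveI : Module.Finite k ↥(f a) := (Submodule.fg_iff_finiteDimensional _).1 (hf a)
    haveI : Module.Finite k ↥(s.sup f) := (Submodule.fg_iff_finiteDimensional _).1
      (Submodule.fg_finset_sup s f fun i _ => hf i)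
    exact (Submodule.finrank_add_le_finrank_add_finrank _ _).trans (by gcongr)

theorem GK_finrank_mul_span_singleton_le (p : Submodule k B) (hp : p.FG) (y : B) :
    Module.finrank k ↥(p * Submodule.span k {y}) ≤ Module.finrank k ↥p := by
  haveI : Module.Finite k ↥p := (Submodule.fg_iff_finiteDimensional _).1 hp
  have h : p * Submodule.span k {y} = p.map (LinearMap.mulRight k y) := by
    ext z; simp [Submodule.mem_mul_span_singleton, eq_comm]
  rw [h]
  exact Submodule.finrank_map_le _ _

theorem GK_span_singleton_pow (y : B) (i : ℕ) :
    (Submodule.span k {y}) ^ i = Submodule.span k {y ^ i} := by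
  induction i with
  | zero => simp [pow_zero, Submodule.one_eq_span]
  | succ n ih =>
    rw [pow_succ, ih, Submodule.span_mul_span, Set.singleton_mul_singleton, ← pow_succ]

end Aux

/-- If `B` is generated as an algebra by a subalgebra `A` together with an element `x`, and
some finite-dimensional generating subspace `V` of `A` satisfies `xV ⊆ Vx + A`, then
`GKdim B ≤ GKdim A + 1`. -/
theorem gkdim_le_of_adjoin_element (k B : Type*) [Field k] [Ring B] [Algebra k B]
    (A : Subalgebra k B) (x : B)
    (hgen : Algebra.adjoin k ((A : Set B) ∪ {x}) = ⊤)
    (V : Submodule k B) (hVA : (V : Set B) ⊆ (A : Set B)) (hVfg : V.FG)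
    (hVgen : Algebra.adjoin k (V : Set B) = A)
    (hxV : ∀ v ∈ V, ∃ w ∈ V, ∃ a ∈ A, x * v = w * x + a) :
    GKdim k B ≤ GKdim k A + 1 := by
  classical
  rcases subsingleton_or_nontrivial B with hss | hnt
  · -- trivial ring: every finrank is zero
    refine le_trans (iSup_le fun W => iSup_le fun _ => ?_) zero_le
    have hz : (fun n : ℕ => ENNReal.ofReal (Real.logb n (Module.finrank k ↥(W^n))))
        = fun _ => (0:ℝ≥0∞) := by
      funext n
      haveI : Subsingleton ↥(W^n) := ⟨fun a b => Subtype.ext (Subsingleton.elim _ _)⟩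
      rw [Module.finrank_zero_of_subsingleton]
      simp
    rw [hz, Filter.limsup_const]
  set T : Submodule k B := 1 ⊔ V with hTdef
  set X : Submodule k B := Submodule.span k {x} with hXdef
  have hT1 : (1 : Submodule k B) ≤ T := le_sup_left
  have hVT : V ≤ T := le_sup_right
  have hxX : x ∈ X := Submodule.mem_span_singleton_self x
  have hU1 : (1 : Submodule k B) ≤ T ⊔ X := le_trans hT1 le_sup_left
  have hTA : T ≤ Subalgebra.toSubmodule A := by
    refine sup_le ?_ ?_
    · intro b hb
      obtain ⟨r, rfl⟩ := Submodule.mem_one.1 hb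
      exact A.algebraMap_mem r
    · exact fun v hv => hVA hv
  have hApow : ∀ a ∈ A, ∃ m : ℕ, a ∈ T ^ m := by
    intro a ha
    rw [← hVgen] at ha
    exact GK_exists_mem_pow hT1 (fun v hv => hVT hv) ha
  have hBtop : Algebra.adjoin k ((V : Set B) ∪ {x}) = ⊤ := by
    apply top_unique
    rw [← hgen]
    apply Algebra.adjoin_le
    rintro y (hy | hy)
    · have hy' : y ∈ A := hy
      rw [← hVgen] at hy'
      exact Algebra.adjoin_mono Set.subset_union_left hy'
    · exact Algebra.subset_adjoin (Set.mem_union_right _ hy)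
  have hBpow : ∀ b : B, ∃ m : ℕ, b ∈ (T ⊔ X) ^ m := by
    intro b
    refine GK_exists_mem_pow hU1 ?_ (show b ∈ Algebra.adjoin k ((V : Set B) ∪ {x}) by
      rw [hBtop]; trivial)
    refine Set.union_subset (fun v hv => ?_) (fun y hy => ?_)
    · exact Submodule.mem_sup_left (hVT hv)
    · rw [Set.mem_singleton_iff] at hy
      subst hy
      exact Submodule.mem_sup_right hxX
  -- choose the bound M
  have hchoice : ∀ v : B, ∃ m : ℕ, v ∈ V → x * v ∈ V * X + T ^ m := by
    intro v
    by_cases hv : v ∈ V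
    · obtain ⟨w, hw, a, ha, heq⟩ := hxV v hv
      obtain ⟨m, hm⟩ := hApow a ha
      refine ⟨m, fun _ => ?_⟩
      rw [heq, Submodule.add_eq_sup]
      exact add_mem (Submodule.mem_sup_left (Submodule.mul_mem_mul hw hxX))
        (Submodule.mem_sup_right hm)
    · exact ⟨0, fun h => absurd h hv⟩
  choose mf hmf using hchoice
  obtain ⟨s, hs⟩ := id hVfg
  set M : ℕ := s.sup mf + 1 with hMdef
  have hM1 : 1 ≤ M := Nat.le_add_left 1 _
  have key1 : X * V ≤ V * X + T ^ M := by
    have hVle : V ≤ Submodule.comap (LinearMap.mulLeft k x) (V * X + T ^ M) := by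
      refine le_trans (le_of_eq hs.symm) (Submodule.span_le.2 ?_)
      intro v hv
      have hvV : v ∈ V := hs ▸ Submodule.subset_span hv
      have h1 := hmf v hvV
      have h2 : V * X + T ^ (mf v) ≤ V * X + T ^ M := by
        rw [Submodule.add_eq_sup, Submodule.add_eq_sup]
        exact sup_le_sup le_rfl (pow_le_pow_right' hT1
          (le_trans (Finset.le_sup hv) (Nat.le_succ _)))
      exact h2 h1
    apply Submodule.mul_le.2
    intro a ha v hv
    obtain ⟨c, rfl⟩ := Submodule.mem_span_singleton.1 ha
    rw [smul_mul_assoc]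
    exact Submodule.smul_mem _ c (hVle hv)
  have key1' : X * T ≤ T * X + T ^ M := by
    calc X * T = X * 1 ⊔ X * V := by rw [hTdef, Submodule.mul_sup]
      _ = X ⊔ X * V := by rw [mul_one]
      _ ≤ T * X + T ^ M := by
          refine sup_le ?_ ?_
          · rw [Submodule.add_eq_sup]
            exact le_trans (le_of_eq (one_mul X).symm)
              (le_trans (mul_le_mul' hT1 le_rfl) le_sup_left)
          · exact le_trans key1 (by
              rw [Submodule.add_eq_sup, Submodule.add_eq_sup]
              exact sup_le_sup (mul_le_mul' hVT le_rfl) le_rfl)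
  have hTfg : T.FG := Submodule.FG.sup
    (⟨{1}, by rw [Finset.coe_singleton, ← Submodule.one_eq_span]⟩) hVfg
  have hone : ∀ m : ℕ, (1:B) ∈ T ^ m := by
    intro m
    refine pow_le_pow_right' hT1 (Nat.zero_le m) ?_
    rw [pow_zero]
    exact Submodule.mem_one.2 ⟨1, map_one _⟩
  -- dimensions of powers of T
  set d : ℕ → ℕ := fun m => Module.finrank k ↥(T ^ m) with hddef
  have hd1 : ∀ m, 1 ≤ d m := by
    intro m
    haveI : Module.Finite k ↥(T ^ m) := (Submodule.fg_iff_finiteDimensional _).1 (hTfg.pow m)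
    haveI : Nontrivial ↥(T ^ m) :=
      ⟨⟨⟨1, hone m⟩, 0, fun hc => one_ne_zero (α := B) (congrArg Subtype.val hc)⟩⟩
    exact Module.finrank_pos_iff.2 ‹Nontrivial ↥(T ^ m)›
  -- bound the dimension of powers of any f.g. subspace of B
  refine iSup_le fun W => iSup_le fun hW => ?_
  obtain ⟨t, ht⟩ := id hW
  choose Nf hNf using hBpow
  set N : ℕ := t.sup Nf + 1 with hNdef
  have hN1 : 1 ≤ N := Nat.le_add_left 1 _
  have hWU : W ≤ (T ⊔ X) ^ N := by
    refine le_trans (le_of_eq ht.symm) (Submodule.span_le.2 fun w hw => ?_)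
    exact pow_le_pow_right' hU1 (le_trans (Finset.le_sup hw) (Nat.le_succ _)) (hNf w)
  have hpiece_fg : ∀ c i : ℕ, (T ^ c * X ^ i).FG := fun c i =>
    (hTfg.pow c).mul ((Submodule.fg_span_singleton x).pow i)
  have hD : ∀ n, Module.finrank k ↥(W ^ n) ≤ (N * n + 1) * d ((M * N) * n) := by
    intro n
    have h1 : W ^ n ≤ (T ⊔ X) ^ (N * n) := by
      rw [pow_mul]
      exact pow_le_pow_left' hWU n
    have h2 := GK_key_U hT1 hM1 key1' (N * n)
    have hFfg : ((Finset.range (N*n+1)).sup (fun i => T ^ (M*(N*n)) * X ^ i)).FG :=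
      Submodule.fg_finset_sup _ _ fun i _ => hpiece_fg _ i
    haveI : Module.Finite k ↥((Finset.range (N*n+1)).sup (fun i => T ^ (M*(N*n)) * X ^ i)) :=
      (Submodule.fg_iff_finiteDimensional _).1 hFfg
    have h3 : Module.finrank k ↥(W ^ n) ≤
        Module.finrank k ↥((Finset.range (N*n+1)).sup (fun i => T ^ (M*(N*n)) * X ^ i)) :=
      Submodule.finrank_mono (le_trans h1 h2)
    have h4 := GK_finrank_finsetSup_le (Finset.range (N*n+1))
      (fun i => T ^ (M*(N*n)) * X ^ i) (fun i => hpiece_fg _ i)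
    have h5 : ∀ i : ℕ, Module.finrank k ↥(T ^ (M*(N*n)) * X ^ i) ≤ d (M*(N*n)) := by
      intro i
      rw [hXdef, GK_span_singleton_pow]
      exact GK_finrank_mul_span_singleton_le _ (hTfg.pow _) _
    have h6 : ∑ i ∈ Finset.range (N*n+1), Module.finrank k ↥(T ^ (M*(N*n)) * X ^ i)
        ≤ (N*n+1) * d (M*(N*n)) := by
      calc ∑ i ∈ Finset.range (N*n+1), Module.finrank k ↥(T ^ (M*(N*n)) * X ^ i)
          ≤ ∑ _i ∈ Finset.range (N*n+1), d (M*(N*n)) := Finset.sum_le_sum fun i _ => h5 i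
        _ = (N*n+1) * d (M*(N*n)) := by rw [Finset.sum_const, Finset.card_range, smul_eq_mul]
    have hexp : M * (N * n) = (M * N) * n := by rw [mul_assoc]
    rw [← hexp]
    exact le_trans h3 (le_trans h4 h6)
  -- transfer T to a submodule of A
  have hinj : Function.Injective (Subalgebra.val A).toLinearMap := Subtype.val_injective
  set T' : Submodule k ↥A := Submodule.comap (Subalgebra.val A).toLinearMap T with hT'def
  have hmapT : Submodule.map (Subalgebra.val A).toLinearMap T' = T := by
    rw [hT'def, Submodule.map_comap_eq]
    refine inf_eq_right.2 fun b hb => LinearMap.mem_range.2 ⟨⟨b, hTA hb⟩, rfl⟩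
  have hmapTm : ∀ m : ℕ, Submodule.map (Subalgebra.val A).toLinearMap (T' ^ m) = T ^ m := by
    intro m
    rw [Submodule.map_pow, hmapT]
  have hdm : ∀ m, d m = Module.finrank k ↥(T' ^ m) := by
    intro m
    rw [hddef]
    show Module.finrank k ↥(T ^ m) = _
    rw [← hmapTm m]
    exact (LinearEquiv.finrank_eq
      (Submodule.equivMapOfInjective (Subalgebra.val A).toLinearMap hinj (T' ^ m))).symm
  have hT'fg : T'.FG := by
    haveI : Module.Finite k ↥T := (Submodule.fg_iff_finiteDimensional _).1 hTfg
    have e : ↥T' ≃ₗ[k] ↥T :=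
      (Submodule.equivMapOfInjective (Subalgebra.val A).toLinearMap hinj T').trans
        (LinearEquiv.ofEq _ _ hmapT)
    exact (Submodule.fg_iff_finiteDimensional _).2 (Module.Finite.equiv e.symm)
  have hL : Filter.limsup (fun m : ℕ => ENNReal.ofReal (Real.logb m (d m))) Filter.atTop
      ≤ GKdim k ↥A := by
    have heq : (fun m : ℕ => ENNReal.ofReal (Real.logb m (d m)))
        = fun m : ℕ => ENNReal.ofReal (Real.logb m (Module.finrank k ↥(T' ^ m))) := by
      funext m
      rw [hdm]
    rw [heq]
    exact le_iSup₂ (f := fun (Vv : Submodule k ↥A) (_ : Vv.FG) =>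
      Filter.limsup (fun n : ℕ =>
        ENNReal.ofReal (Real.logb n (Module.finrank k ↥(Vv ^ n)))) Filter.atTop) T' hT'fg
  exact GK_analysis_aux d (fun n => Module.finrank k ↥(W ^ n)) (M * N) N
    (Nat.one_le_iff_ne_zero.2 (Nat.mul_ne_zero (by omega) (by omega))) hd1 hD _ hL
end
end

section
/- In the localisation O_q(M_{m,n})[X_{1n}⁻¹] (with m,n ≥ 2), each element X'_{ij} := X_{ij} − q⁻¹X_{1j}X_{in}X_{1n}⁻¹, for 2 ≤ i ≤ m and 1 ≤ j ≤ n−1, commutes with X_{1n}. -/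
noncomputable section
open scoped BigOperators

/-- The defining relations of an `m × n` `q`-quantum matrix. -/
def IsQMat {k A : Type*} [Field k] [Ring A] [Algebra k A] (q : k) {m n : ℕ}
    (X : Fin m → Fin n → A) : Prop :=
  (∀ (i : Fin m) (j l : Fin n), j < l → X i j * X i l = q • (X i l * X i j)) ∧
  (∀ (i r : Fin m) (j : Fin n), i < r → X i j * X r j = q • (X r j * X i j)) ∧
  (∀ (i r : Fin m) (j l : Fin n), i < r → j < l → X i l * X r j = X r j * X i l) ∧
  (∀ (i r : Fin m) (j l : Fin n), i < r → j < l →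
    X i j * X r l - X r l * X i j = (q - q⁻¹) • (X i l * X r j))

/-- The relations defining `O_q(M_{m,n})` as a quotient of the free algebra. -/
inductive QMRel (k : Type*) [Field k] (q : k) (m n : ℕ) :
    FreeAlgebra k (Fin m × Fin n) → FreeAlgebra k (Fin m × Fin n) → Prop
  | row (i : Fin m) (j l : Fin n) (h : j < l) :
      QMRel k q m n (FreeAlgebra.ι k (i, j) * FreeAlgebra.ι k (i, l))
        (q • (FreeAlgebra.ι k (i, l) * FreeAlgebra.ι k (i, j)))
  | col (i r : Fin m) (j : Fin n) (h : i < r) :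
      QMRel k q m n (FreeAlgebra.ι k (i, j) * FreeAlgebra.ι k (r, j))
        (q • (FreeAlgebra.ι k (r, j) * FreeAlgebra.ι k (i, j)))
  | anti (i r : Fin m) (j l : Fin n) (h1 : i < r) (h2 : j < l) :
      QMRel k q m n (FreeAlgebra.ι k (i, l) * FreeAlgebra.ι k (r, j))
        (FreeAlgebra.ι k (r, j) * FreeAlgebra.ι k (i, l))
  | diag (i r : Fin m) (j l : Fin n) (h1 : i < r) (h2 : j < l) :
      QMRel k q m n (FreeAlgebra.ι k (i, j) * FreeAlgebra.ι k (r, l))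
        (FreeAlgebra.ι k (r, l) * FreeAlgebra.ι k (i, j) +
          (q - q⁻¹) • (FreeAlgebra.ι k (i, l) * FreeAlgebra.ι k (r, j)))

/-- The quantum matrix algebra `O_q(M_{m,n})`. -/
abbrev OqM (k : Type*) [Field k] (q : k) (m n : ℕ) := RingQuot (QMRel k q m n)

/-- The canonical generators `X_{ij}` of `O_q(M_{m,n})`. -/
def qX (k : Type*) [Field k] (q : k) (m n : ℕ) (i : Fin m) (j : Fin n) : OqM k q m n :=
  RingQuot.mkAlgHom k (QMRel k q m n) (FreeAlgebra.ι k (i, j))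

/-- The number of inversions (the length `ℓ(σ)`) of a permutation of `Fin t`. -/
def invCount {t : ℕ} (σ : Equiv.Perm (Fin t)) : ℕ :=
  Finset.card (Finset.univ.filter (fun p : Fin t × Fin t => p.1 < p.2 ∧ σ p.2 < σ p.1))

/-- The quantum determinant of a `t × t` matrix with entries in an algebra:
`Σ_σ (-q)^{ℓ(σ)} M_{1,σ(1)} ⋯ M_{t,σ(t)}`. -/
def qdet {k : Type*} [Field k] {A : Type*} [Ring A] [Algebra k A] (q : k) {t : ℕ}
    (M : Fin t → Fin t → A) : A :=
  ∑ σ : Equiv.Perm (Fin t), ((-q) ^ invCount σ) • (List.ofFn (fun i => M i (σ i))).prod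

/-- The quantum minor `[I|J]` of the matrix `X` on rows `I` and columns `J`. -/
def qminor {k : Type*} [Field k] {A : Type*} [Ring A] [Algebra k A] (q : k) {m n t : ℕ}
    (X : Fin m → Fin n → A) (I : Finset (Fin m)) (J : Finset (Fin n))
    (hI : I.card = t) (hJ : J.card = t) : A :=
  qdet q (fun a b => X (I.orderIsoOfFin hI a) (J.orderIsoOfFin hJ b))

/-- The elements `X'_{ij} = X_{ij} - q⁻¹ X_{1j} X_{in} X_{1n}⁻¹` in a localisation of
`O_q(M_{m,n})` at the normal element `X_{1n}`, where `φ` is the localisation map and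
`u = X_{1n}⁻¹`. -/
def Xp {k B : Type*} [Field k] [Ring B] [Algebra k B] (q : k) {m n : ℕ}
    (hm : 0 < m) (hn : 0 < n) (φ : OqM k q m n →ₐ[k] B) (u : B)
    (i : Fin m) (j : Fin n) : B :=
  φ (qX k q m n i j) -
    q⁻¹ • (φ (qX k q m n ⟨0, hm⟩ j) * φ (qX k q m n i ⟨n - 1, by omega⟩) * u)

/-! `X_{1n}` commutes with `X_{ij}`, and it commutes with `X_{1j} X_{in}` because moving it
past `X_{1j}` costs a factor `q` and past `X_{in}` a factor `q⁻¹`. Hence it also commutes with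
`X_{1j} X_{in} X_{1n}⁻¹`, and so with `X'_{ij}`. -/

theorem commute_mul_of_skew_commute {k A : Type*} [Field k] [Ring A] [Algebra k A]
    {q : k} (hq : q ≠ 0) {x b c : A} (hbx : b * x = q • (x * b)) (hxc : x * c = q • (c * x)) :
    Commute x (b * c) := by
  have hcx : c * x = q⁻¹ • (x * c) := by rw [hxc, smul_smul, inv_mul_cancel₀ hq, one_smul]
  calc x * (b * c) = q⁻¹ • (q • (x * b) * c) := by
        rw [smul_mul_assoc, smul_smul, inv_mul_cancel₀ hq, one_smul, mul_assoc]
    _ = b * c * x := by rw [← hbx, mul_assoc, mul_assoc, hcx, mul_smul_comm]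

theorem isQMat_qX (k : Type*) [Field k] (q : k) (m n : ℕ) : IsQMat q (qX k q m n) := by
  refine ⟨fun i j l h => ?_, fun i r j h => ?_, fun i r j l h1 h2 => ?_,
    fun i r j l h1 h2 => ?_⟩
  · simpa [qX] using RingQuot.mkAlgHom_rel k (QMRel.row (k := k) (q := q) i j l h)
  · simpa [qX] using RingQuot.mkAlgHom_rel k (QMRel.col (k := k) (q := q) (n := n) i r j h)
  · simpa [qX] using RingQuot.mkAlgHom_rel k (QMRel.anti (k := k) (q := q) i r j l h1 h2)
  · rw [sub_eq_iff_eq_add']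
    simpa [qX] using RingQuot.mkAlgHom_rel k (QMRel.diag (k := k) (q := q) i r j l h1 h2)

namespace IsQMat

variable {k A B : Type*} [Field k] [Ring A] [Algebra k A] [Ring B] [Algebra k B]
  {q : k} {m n : ℕ} {X : Fin m → Fin n → A}

theorem map (hX : IsQMat q X) (f : A →ₐ[k] B) : IsQMat q (fun i j => f (X i j)) := by
  obtain ⟨hrow, hcol, hanti, hdiag⟩ := hX
  refine ⟨fun i j l h => ?_, fun i r j h => ?_, fun i r j l h1 h2 => ?_,
    fun i r j l h1 h2 => ?_⟩
  · simp only [← map_mul, ← map_smul, hrow i j l h]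
  · simp only [← map_mul, ← map_smul, hcol i r j h]
  · simp only [← map_mul, hanti i r j l h1 h2]
  · simp only [← map_mul, ← map_smul, ← map_sub, hdiag i r j l h1 h2]

theorem commute_of_lt_of_lt (hX : IsQMat q X) {i r : Fin m} {j l : Fin n} (hir : i < r)
    (hjl : j < l) : Commute (X i l) (X r j) :=
  hX.2.2.1 i r j l hir hjl

theorem commute_mul_of_lt_of_lt (hX : IsQMat q X) (hq : q ≠ 0) {i r : Fin m} {j l : Fin n}
    (hir : i < r) (hjl : j < l) : Commute (X i l) (X i j * X r l) :=
  commute_mul_of_skew_commute hq (hX.1 i j l hjl) (hX.2.1 i r l hir)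

end IsQMat

/-- In the localisation `O_q(M_{m,n})[X_{1n}⁻¹]`, each `X'_{ij}` (for `2 ≤ i ≤ m`,
`1 ≤ j ≤ n-1`, in one-based indexing) commutes with `X_{1n}`. -/
theorem xprime_commutes_with_x1n {k B : Type*} [Field k] [Ring B] [Algebra k B]
    (q : k) (hq : q ≠ 0) {m n : ℕ} (hm : 2 ≤ m) (hn : 2 ≤ n)
    (φ : OqM k q m n →ₐ[k] B) (u : B)
    (hu1 : φ (qX k q m n ⟨0, by omega⟩ ⟨n - 1, by omega⟩) * u = 1)
    (hu2 : u * φ (qX k q m n ⟨0, by omega⟩ ⟨n - 1, by omega⟩) = 1)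
    (i : Fin m) (hi : 1 ≤ (i : ℕ)) (j : Fin n) (hj : (j : ℕ) < n - 1) :
    Xp q (by omega) (by omega) φ u i j * φ (qX k q m n ⟨0, by omega⟩ ⟨n - 1, by omega⟩)
      = φ (qX k q m n ⟨0, by omega⟩ ⟨n - 1, by omega⟩) * Xp q (by omega) (by omega) φ u i j := by
  have hX := (isQMat_qX k q m n).map φ
  have h0i : (⟨0, by omega⟩ : Fin m) < i := Fin.lt_def.mpr hi
  have hjn : j < (⟨n - 1, by omega⟩ : Fin n) := Fin.lt_def.mpr hj
  have hxu : Commute (φ (qX k q m n ⟨0, by omega⟩ ⟨n - 1, by omega⟩)) u := hu1.trans hu2.symm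
  have hx_Xp := (hX.commute_of_lt_of_lt h0i hjn).sub_right
    (((hX.commute_mul_of_lt_of_lt hq h0i hjn).mul_right hxu).smul_right q⁻¹)
  exact hx_Xp.symm.eq
end
end

section
/- Let X be an n×n generic q-quantum matrix with n ≥ 2, and in O_q(M_n)[X_{1n}⁻¹] let X' be the (n−1)×(n−1) matrix with entries X'_{ij} = X_{ij} − q⁻¹X_{1j}X_{in}X_{1n}⁻¹ (2 ≤ i ≤ n, 1 ≤ j ≤ n−1). Then (det_q X')X_{1n} = X_{1n}(det_q X') = (−q)^{1−n} det_q X. -/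
noncomputable section
open scoped BigOperators

namespace QRed
open Equiv Finset

lemma val_succAbove {t : ℕ} (c : Fin (t+1)) (d : Fin t) :
    ((c.succAbove d : Fin (t+1)) : ℕ) = if (d:ℕ) < c then (d:ℕ) else (d:ℕ)+1 := by
  rw [Fin.succAbove]
  split_ifs with h h1 h2 <;> simp_all [Fin.lt_def]

lemma succAbove_lt_iff {t : ℕ} (c : Fin (t+1)) (d : Fin t) :
    c.succAbove d < c ↔ (d : ℕ) < c := by
  rw [Fin.lt_def, val_succAbove]
  split_ifs with h <;> omega

/-- The permutation of `Fin (t+1)` sending `0 ↦ c` and `i.succ ↦ c.succAbove (e i)`. -/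
def insPerm {t : ℕ} (c : Fin (t+1)) (e : Equiv.Perm (Fin t)) : Equiv.Perm (Fin (t+1)) :=
  (finSuccEquiv t).trans ((Equiv.optionCongr e).trans (finSuccEquiv' c).symm)

@[simp] lemma insPerm_zero {t : ℕ} (c : Fin (t+1)) (e : Equiv.Perm (Fin t)) :
    insPerm c e 0 = c := by
  simp [insPerm]

@[simp] lemma insPerm_succ {t : ℕ} (c : Fin (t+1)) (e : Equiv.Perm (Fin t)) (i : Fin t) :
    insPerm c e i.succ = c.succAbove (e i) := by
  simp [insPerm]

lemma insPerm_bijective {t : ℕ} :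
    Function.Bijective (fun p : Fin (t+1) × Equiv.Perm (Fin t) => insPerm p.1 p.2) := by
  rw [Fintype.bijective_iff_injective_and_card]
  constructor
  · rintro ⟨c, e⟩ ⟨c', e'⟩ h
    simp only at h
    have h0 : c = c' := by
      have := congrArg (fun σ : Equiv.Perm (Fin (t+1)) => σ 0) h
      simpa using this
    subst h0
    have he : ∀ i, e i = e' i := by
      intro i
      have := congrArg (fun σ : Equiv.Perm (Fin (t+1)) => σ i.succ) h
      simp only [insPerm_succ] at this
      exact Fin.succAbove_right_injective this
    have : e = e' := Equiv.ext he
    simp [this]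
  · simp [Fintype.card_perm, Fintype.card_fin, Nat.factorial_succ]

lemma card_filter_val_lt {t m : ℕ} (hm : m ≤ t) :
    (Finset.univ.filter (fun x : Fin t => (x:ℕ) < m)).card = m := by
  have : (Finset.univ.filter (fun x : Fin t => (x:ℕ) < m)) =
      (Finset.range m).attachFin (fun a ha => lt_of_lt_of_le (Finset.mem_range.mp ha) hm) := by
    ext x
    simp [Finset.mem_attachFin]
  rw [this, Finset.card_attachFin, Finset.card_range]

lemma invCount_eq_sum {t : ℕ} (σ : Equiv.Perm (Fin t)) :
    invCount σ = ∑ a : Fin t, ∑ b : Fin t, (if a < b ∧ σ b < σ a then 1 else 0) := by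
  rw [invCount, Finset.card_filter, Fintype.sum_prod_type]

lemma invCount_insPerm {t : ℕ} (c : Fin (t+1)) (e : Equiv.Perm (Fin t)) :
    invCount (insPerm c e) = (c : ℕ) + invCount e := by
  rw [invCount_eq_sum, invCount_eq_sum]
  rw [Fin.sum_univ_succ]
  have h1 : ∑ b : Fin (t+1), (if (0:Fin (t+1)) < b ∧ insPerm c e b < insPerm c e 0 then 1 else 0) = (c:ℕ) := by
    rw [Fin.sum_univ_succ]
    have h0 : ((if (0:Fin (t+1)) < 0 ∧ insPerm c e 0 < insPerm c e 0 then 1 else 0) : ℕ) = 0 := by simp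
    rw [h0, zero_add]
    have hc : ∀ j : Fin t, ((if (0:Fin (t+1)) < j.succ ∧ insPerm c e j.succ < insPerm c e 0 then 1 else 0) : ℕ)
        = (fun x : Fin t => if ((x : ℕ) < c) then 1 else 0) (e j) := by
      intro j
      simp only [insPerm_zero, insPerm_succ]
      congr 1
      simp only [eq_iff_iff]
      constructor
      · rintro ⟨-, h⟩; exact (succAbove_lt_iff c (e j)).mp h
      · intro h; exact ⟨Fin.succ_pos j, (succAbove_lt_iff c (e j)).mpr h⟩
    rw [Finset.sum_congr rfl (fun j _ => hc j)]
    rw [Equiv.sum_comp e (fun x : Fin t => if ((x : ℕ) < c) then 1 else 0)]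
    rw [← Finset.card_filter]
    exact card_filter_val_lt (Nat.lt_succ_iff.mp c.isLt)
  rw [h1]
  congr 1
  apply Finset.sum_congr rfl
  intro i _
  rw [Fin.sum_univ_succ]
  have h0 : ((if i.succ < 0 ∧ insPerm c e 0 < insPerm c e i.succ then 1 else 0) : ℕ) = 0 := by
    simp [Fin.not_lt_zero]
  rw [h0, zero_add]
  apply Finset.sum_congr rfl
  intro j _
  simp only [insPerm_succ]
  congr 1
  simp only [eq_iff_iff]
  have hmono := Fin.strictMono_succAbove c
  constructor
  · rintro ⟨hij, hlt⟩
    exact ⟨Fin.succ_lt_succ_iff.mp hij, hmono.lt_iff_lt.mp hlt⟩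
  · rintro ⟨hij, hlt⟩
    exact ⟨Fin.succ_lt_succ_iff.mpr hij, hmono.lt_iff_lt.mpr hlt⟩


variable {k : Type*} [Field k] {B : Type*} [Ring B] [Algebra k B] (q : k)

lemma qdet_fin_zero (M : Fin 0 → Fin 0 → B) : qdet q M = 1 := by
  rw [qdet]
  rw [Finset.sum_eq_single_of_mem (1 : Equiv.Perm (Fin 0)) (Finset.mem_univ _)
    (fun b _ hb => absurd (Subsingleton.elim b 1) hb)]
  have : invCount (1 : Equiv.Perm (Fin 0)) = 0 := by
    rw [invCount]
    apply Finset.card_eq_zero.mpr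
    apply Finset.filter_eq_empty_iff.mpr
    intro p _
    exact p.1.elim0
  simp [this]

lemma qdet_laplace {t : ℕ} (M : Fin (t+1) → Fin (t+1) → B) :
    qdet q M = ∑ c : Fin (t+1), (-q) ^ (c:ℕ) •
      (M 0 c * qdet q (fun a b : Fin t => M a.succ (c.succAbove b))) := by
  rw [qdet, ← Fintype.sum_bijective _ insPerm_bijective _ _ (fun _ => rfl)]
  rw [Fintype.sum_prod_type]
  apply Finset.sum_congr rfl
  intro c _
  rw [qdet, Finset.mul_sum, Finset.smul_sum]
  apply Finset.sum_congr rfl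
  intro e _
  rw [invCount_insPerm, pow_add, mul_smul]
  congr 1
  rw [mul_smul_comm]
  congr 1
  rw [List.ofFn_succ]
  rw [List.prod_cons]
  simp only [insPerm_zero, insPerm_succ]

lemma qdet_fin_one (M : Fin 1 → Fin 1 → B) : qdet q M = M 0 0 := by
  rw [qdet_laplace]
  simp [qdet_fin_zero]


lemma isQMat_comp {m n m' n' : ℕ} {Z : Fin m → Fin n → B} (h : IsQMat q Z)
    {f : Fin m' → Fin m} {g : Fin n' → Fin n} (hf : StrictMono f) (hg : StrictMono g) :
    IsQMat q (fun a b => Z (f a) (g b)) := by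
  obtain ⟨hrow, hcol, hanti, hdiag⟩ := h
  exact ⟨fun i j l hjl => hrow (f i) (g j) (g l) (hg hjl),
    fun i r j hir => hcol (f i) (f r) (g j) (hf hir),
    fun i r j l hir hjl => hanti (f i) (f r) (g j) (g l) (hf hir) (hg hjl),
    fun i r j l hir hjl => hdiag (f i) (f r) (g j) (g l) (hf hir) (hg hjl)⟩

lemma commute_list_prod {c : B} {L : List B} (h : ∀ x ∈ L, c * x = x * c) :
    c * L.prod = L.prod * c := by
  induction L with
  | nil => simp
  | cons a L ih =>
      rw [List.prod_cons, ← mul_assoc, h a List.mem_cons_self, mul_assoc,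
        ih (fun x hx => h x (List.mem_cons_of_mem a hx)), mul_assoc]

lemma commute_qdet {t : ℕ} {M : Fin t → Fin t → B} {c : B}
    (h : ∀ i j, c * M i j = M i j * c) : c * qdet q M = qdet q M * c := by
  rw [qdet, Finset.mul_sum, Finset.sum_mul]
  apply Finset.sum_congr rfl
  intro σ _
  rw [mul_smul_comm, smul_mul_assoc]
  congr 1
  apply commute_list_prod
  intro x hx
  rw [List.mem_ofFn] at hx
  obtain ⟨i, rfl⟩ := hx
  exact h i (σ i)


/-- Position of `c` in the complement of `c.succAbove d`. -/
def dualIdx {s : ℕ} (c : Fin (s+1)) (d : Fin s) : Fin s :=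
  if h : (d:ℕ) < (c:ℕ) then ⟨(c:ℕ)-1, by have := c.isLt; have := d.isLt; omega⟩
  else ⟨(c:ℕ), by have := d.isLt; omega⟩

lemma val_dualIdx {s : ℕ} (c : Fin (s+1)) (d : Fin s) :
    ((dualIdx c d : Fin s) : ℕ) = if (d:ℕ) < (c:ℕ) then (c:ℕ)-1 else (c:ℕ) := by
  rw [dualIdx]
  split_ifs <;> rfl

lemma succAbove_dualIdx {s : ℕ} (c : Fin (s+1)) (d : Fin s) :
    (c.succAbove d).succAbove (dualIdx c d) = c := by
  apply Fin.ext
  rw [val_succAbove, val_dualIdx, val_succAbove]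
  have := c.isLt; have := d.isLt
  split_ifs <;> omega

lemma dualIdx_succAbove {s : ℕ} (c : Fin (s+1)) (d : Fin s) :
    dualIdx (c.succAbove d) (dualIdx c d) = d := by
  apply Fin.ext
  rw [val_dualIdx, val_dualIdx, val_succAbove]
  have := c.isLt; have := d.isLt
  split_ifs <;> omega

lemma succAbove_ne' {s : ℕ} (c : Fin (s+1)) (d : Fin s) : c.succAbove d ≠ c :=
  Fin.succAbove_ne c d

lemma lt_succAbove_of_le {s : ℕ} (c : Fin (s+1)) (d : Fin s) (h : ¬ ((d:ℕ) < (c:ℕ))) :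
    c < c.succAbove d := by
  rw [Fin.lt_def, val_succAbove]
  split_ifs <;> omega

lemma pair_identity (hq : q ≠ 0) (a : ℕ) (x y z w P : B)
    (hanti : y * z = z * y)
    (hdiag : x * w - w * x = (q - q⁻¹) • (y * z)) :
    (-q) ^ a • (z * (y * P)) + (-q) ^ (a+1) • (w * (x * P))
      = (-q) ^ (a+1) • (x * (w * P)) + (-q) ^ (a+2) • (y * (z * P)) := by
  have hwx : w * x = x * w - (q - q⁻¹) • (y * z) := by
    rw [← hdiag]; abel
  have h1 : z * (y * P) = (y * z) * P := by rw [← mul_assoc, ← hanti]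
  have h2 : w * (x * P) = (x * w) * P - (q - q⁻¹) • ((y * z) * P) := by
    rw [← mul_assoc, hwx, sub_mul, smul_mul_assoc]
  have h3 : x * (w * P) = (x * w) * P := by rw [← mul_assoc]
  have h4 : y * (z * P) = (y * z) * P := by rw [← mul_assoc]
  rw [h1, h2, h3, h4, smul_sub, smul_smul]
  have key : (-q) ^ a • ((y * z) * P) - ((-q)^(a+1) * (q - q⁻¹)) • ((y * z) * P)
      = (-q) ^ (a+2) • ((y * z) * P) := by
    rw [← sub_smul]
    congr 1
    have h5 : (-q)^(a+1) = (-q)^a * (-q) := pow_succ _ _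
    have h6 : (-q)^(a+2) = (-q)^a * (-q) * (-q) := by rw [← pow_succ, ← pow_succ]
    rw [h5, h6]
    field_simp
    ring
  rw [← key]
  abel


lemma pair_zero (a : ℕ) (x y P : B) (hrow : x * y = q • (y * x)) :
    (-q) ^ a • (x * (y * P)) + (-q) ^ (a+1) • (y * (x * P)) = 0 := by
  have h1 : x * (y * P) = q • (y * (x * P)) := by
    rw [← mul_assoc, hrow, smul_mul_assoc, mul_assoc]
  rw [h1, smul_smul, pow_succ, ← add_smul]
  have : (-q) ^ a * q + (-q) ^ a * -q = 0 := by ring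
  rw [this, zero_smul]

section RMat

lemma sum_pair_cancel {α β : Type*} [Fintype α] [Fintype β] (F : α × β → B)
    (g : α × β → α × β) (h1 : ∀ p, F p + F (g p) = 0) (h2 : ∀ p, g p ≠ p)
    (h3 : ∀ p, g (g p) = p) : ∑ a : α, ∑ b : β, F (a, b) = 0 := by
  rw [← Fintype.sum_prod_type]
  exact Finset.sum_ninvolution g h1 (fun p _ => h2 p) (fun p => Finset.mem_univ _) h3

variable {t : ℕ} (Z : Fin (t+2) → Fin (t+2) → B)

/-- Second-order minor: delete rows 0,1 and columns `c`, `c.succAbove d`. -/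
def minor2 (c : Fin (t+2)) (d : Fin (t+1)) : B :=
  qdet q fun (a b : Fin t) => Z a.succ.succ (c.succAbove (d.succAbove b))

/-- Minor deleting row 1 and column `j`. -/
def m2 (j : Fin (t+2)) : B :=
  qdet q fun (a b : Fin (t+1)) => Z ((1 : Fin (t+2)).succAbove a) (j.succAbove b)

lemma succAbove_one_zero : (1 : Fin (t+2)).succAbove (0 : Fin (t+1)) = 0 := by
  apply Fin.ext
  rw [val_succAbove]
  simp

lemma succAbove_one_succ (a : Fin t) :
    (1 : Fin (t+2)).succAbove a.succ = a.succ.succ := by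
  apply Fin.ext
  rw [val_succAbove]
  simp

lemma minor2_symm (c : Fin (t+2)) (d : Fin (t+1)) :
    minor2 q Z c d = minor2 q Z (c.succAbove d) (dualIdx c d) := by
  simp only [minor2]
  congr 1
  funext a b
  congr 1
  apply Fin.ext
  have hc := c.isLt; have hd := d.isLt; have hb := b.isLt
  simp only [val_succAbove, val_dualIdx]
  split_ifs <;> omega

lemma m2_expand (j : Fin (t+2)) :
    m2 q Z j = ∑ d : Fin (t+1), (-q) ^ (d:ℕ) • (Z 0 (j.succAbove d) * minor2 q Z j d) := by
  rw [m2, qdet_laplace]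
  simp only [succAbove_one_zero, succAbove_one_succ, minor2]

lemma qdet_expand2 :
    qdet q Z = ∑ c : Fin (t+2), ∑ d : Fin (t+1),
      (-q) ^ ((c:ℕ) + (d:ℕ)) • (Z 0 c * (Z 1 (c.succAbove d) * minor2 q Z c d)) := by
  rw [qdet_laplace]
  apply Finset.sum_congr rfl
  intro c _
  rw [qdet_laplace, Finset.mul_sum, Finset.smul_sum]
  apply Finset.sum_congr rfl
  intro d _
  rw [mul_smul_comm, smul_smul, ← pow_add, Fin.succ_zero_eq_one]
  rfl

variable {Z}

/-- The pairing involution on column pairs. -/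
def colSwap : Fin (t+2) × Fin (t+1) → Fin (t+2) × Fin (t+1) :=
  fun p => (p.1.succAbove p.2, dualIdx p.1 p.2)

lemma colSwap_involutive : ∀ p : Fin (t+2) × Fin (t+1), colSwap (colSwap p) = p := by
  rintro ⟨c, d⟩
  simp only [colSwap]
  rw [succAbove_dualIdx, dualIdx_succAbove]

lemma colSwap_ne : ∀ p : Fin (t+2) × Fin (t+1), colSwap p ≠ p := by
  rintro ⟨c, d⟩ h
  have : (colSwap (c, d)).1 = c := by rw [h]
  exact succAbove_ne' c d this

lemma colSwap_val (c : Fin (t+2)) (d : Fin (t+1)) :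
    ((c.succAbove d : Fin (t+2)) : ℕ) + ((dualIdx c d : Fin (t+1)) : ℕ)
      = if (d:ℕ) < (c:ℕ) then (c:ℕ) + (d:ℕ) - 1 else (c:ℕ) + (d:ℕ) + 1 := by
  rw [val_succAbove, val_dualIdx]
  split_ifs <;> omega

/-- Wrong-row Cramer identity: row 0 against minors deleting row 1. -/
lemma cramer_wrong (hZ : IsQMat q Z) :
    ∑ j : Fin (t+2), (-q) ^ (j:ℕ) • (Z 0 j * m2 q Z j) = 0 := by
  obtain ⟨hrow, hcol, hanti, hdiag⟩ := hZ
  have step : ∀ j : Fin (t+2), (-q) ^ (j:ℕ) • (Z 0 j * m2 q Z j) =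
      ∑ d : Fin (t+1), (-q) ^ ((j:ℕ)+(d:ℕ)) •
        (Z 0 j * (Z 0 (j.succAbove d) * minor2 q Z j d)) := by
    intro j
    rw [m2_expand, Finset.mul_sum, Finset.smul_sum]
    apply Finset.sum_congr rfl
    intro d _
    rw [mul_smul_comm, smul_smul, ← pow_add]
  rw [Finset.sum_congr rfl (fun j _ => step j)]
  have hcancelB : ∀ p : Fin (t+2) × Fin (t+1), ¬ ((p.2:ℕ) < (p.1:ℕ)) →
      (fun p : Fin (t+2) × Fin (t+1) => (-q) ^ ((p.1:ℕ)+(p.2:ℕ)) •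
        (Z 0 p.1 * (Z 0 (p.1.succAbove p.2) * minor2 q Z p.1 p.2))) p +
      (fun p : Fin (t+2) × Fin (t+1) => (-q) ^ ((p.1:ℕ)+(p.2:ℕ)) •
        (Z 0 p.1 * (Z 0 (p.1.succAbove p.2) * minor2 q Z p.1 p.2))) (colSwap p) = 0 := by
    rintro ⟨c, d⟩ hB
    simp only [colSwap]
    rw [succAbove_dualIdx, ← minor2_symm, colSwap_val]
    rw [if_neg hB]
    exact pair_zero q _ _ _ _ (hrow 0 c (c.succAbove d) (lt_succAbove_of_le c d hB))
  apply sum_pair_cancel (fun p : Fin (t+2) × Fin (t+1) => (-q) ^ ((p.1:ℕ)+(p.2:ℕ)) •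
    (Z 0 p.1 * (Z 0 (p.1.succAbove p.2) * minor2 q Z p.1 p.2))) colSwap _ colSwap_ne
    colSwap_involutive
  intro p
  by_cases hB : ((p.2:ℕ) < (p.1:ℕ))
  · have h2 : ¬ (((colSwap p).2 : ℕ) < ((colSwap p).1 : ℕ)) := by
      simp only [colSwap, val_succAbove, val_dualIdx]
      split_ifs <;> omega
    have := hcancelB (colSwap p) h2
    rw [colSwap_involutive p] at this
    rw [add_comm]
    exact this
  · exact hcancelB p hB

/-- Diagonal Cramer identity: row 1 against minors deleting row 1. -/
lemma cramer_diag (hq : q ≠ 0) (hZ : IsQMat q Z) :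
    ∑ j : Fin (t+2), (-q) ^ (j:ℕ) • (Z 1 j * m2 q Z j) = (-q) • qdet q Z := by
  obtain ⟨hrow, hcol, hanti, hdiag⟩ := hZ
  have hL : ∀ j : Fin (t+2), (-q) ^ (j:ℕ) • (Z 1 j * m2 q Z j) =
      ∑ d : Fin (t+1), (-q) ^ ((j:ℕ)+(d:ℕ)) •
        (Z 1 j * (Z 0 (j.succAbove d) * minor2 q Z j d)) := by
    intro j
    rw [m2_expand, Finset.mul_sum, Finset.smul_sum]
    apply Finset.sum_congr rfl
    intro d _
    rw [mul_smul_comm, smul_smul, ← pow_add]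
  have hR : (-q) • qdet q Z = ∑ c : Fin (t+2), ∑ d : Fin (t+1),
      (-q) ^ ((c:ℕ)+(d:ℕ)+1) • (Z 0 c * (Z 1 (c.succAbove d) * minor2 q Z c d)) := by
    rw [qdet_expand2 q Z, Finset.smul_sum]
    apply Finset.sum_congr rfl
    intro c _
    rw [Finset.smul_sum]
    apply Finset.sum_congr rfl
    intro d _
    rw [smul_smul, ← pow_succ']
  rw [Finset.sum_congr rfl (fun j _ => hL j), ← sub_eq_zero, hR, ← Finset.sum_sub_distrib]
  simp only [← Finset.sum_sub_distrib]
  have key : ∀ p : Fin (t+2) × Fin (t+1), ¬ ((p.2:ℕ) < (p.1:ℕ)) →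
      (fun p : Fin (t+2) × Fin (t+1) =>
        (-q) ^ ((p.1:ℕ)+(p.2:ℕ)) • (Z 1 p.1 * (Z 0 (p.1.succAbove p.2) * minor2 q Z p.1 p.2)) -
        (-q) ^ ((p.1:ℕ)+(p.2:ℕ)+1) • (Z 0 p.1 * (Z 1 (p.1.succAbove p.2) * minor2 q Z p.1 p.2))) p +
      (fun p : Fin (t+2) × Fin (t+1) =>
        (-q) ^ ((p.1:ℕ)+(p.2:ℕ)) • (Z 1 p.1 * (Z 0 (p.1.succAbove p.2) * minor2 q Z p.1 p.2)) -
        (-q) ^ ((p.1:ℕ)+(p.2:ℕ)+1) • (Z 0 p.1 * (Z 1 (p.1.succAbove p.2) * minor2 q Z p.1 p.2)))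
        (colSwap p) = 0 := by
    rintro ⟨c, d⟩ hB
    simp only [colSwap]
    rw [succAbove_dualIdx, ← minor2_symm, colSwap_val, if_neg hB]
    rw [sub_add_sub_comm, sub_eq_zero]
    have hcv : c < c.succAbove d := lt_succAbove_of_le c d hB
    exact pair_identity q hq ((c:ℕ)+(d:ℕ)) (Z 0 c) (Z 0 (c.succAbove d)) (Z 1 c)
      (Z 1 (c.succAbove d)) (minor2 q Z c d)
      (hanti 0 1 c (c.succAbove d) Fin.zero_lt_one hcv)
      (hdiag 0 1 c (c.succAbove d) Fin.zero_lt_one hcv)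
  apply sum_pair_cancel (fun p : Fin (t+2) × Fin (t+1) =>
      (-q) ^ ((p.1:ℕ)+(p.2:ℕ)) • (Z 1 p.1 * (Z 0 (p.1.succAbove p.2) * minor2 q Z p.1 p.2)) -
      (-q) ^ ((p.1:ℕ)+(p.2:ℕ)+1) • (Z 0 p.1 * (Z 1 (p.1.succAbove p.2) * minor2 q Z p.1 p.2)))
    colSwap _ colSwap_ne colSwap_involutive
  intro p
  by_cases hB : ((p.2:ℕ) < (p.1:ℕ))
  · have h2 : ¬ (((colSwap p).2 : ℕ) < ((colSwap p).1 : ℕ)) := by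
      simp only [colSwap, val_succAbove, val_dualIdx]
      split_ifs <;> omega
    have := key (colSwap p) h2
    rw [colSwap_involutive p] at this
    rw [add_comm]
    exact this
  · exact key p hB

end RMat


section Main

/-- The entries `X'_{ij}` relative to corner `Z 0 (last n)` and its inverse `u`. -/
def zp {n : ℕ} (Z : Fin (n+1) → Fin (n+1) → B) (u : B) (a b : Fin n) : B :=
  Z a.succ b.castSucc - q⁻¹ • (Z 0 b.castSucc * Z a.succ (Fin.last n) * u)

variable {n : ℕ} {Z : Fin (n+1) → Fin (n+1) → B} {u : B}

lemma hu_gen (hu1 : Z 0 (Fin.last n) * u = 1) (hu2 : u * Z 0 (Fin.last n) = 1)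
    (s : k) (x : B) (h : x * Z 0 (Fin.last n) = s • (Z 0 (Fin.last n) * x)) :
    u * x = s • (x * u) := by
  calc u * x = u * (x * Z 0 (Fin.last n)) * u := by
        rw [mul_assoc, mul_assoc, hu1, mul_one]
    _ = u * (s • (Z 0 (Fin.last n) * x)) * u := by rw [h]
    _ = s • (u * (Z 0 (Fin.last n) * (x * u))) := by
        rw [mul_smul_comm, smul_mul_assoc, mul_assoc, mul_assoc]
    _ = s • (x * u) := by rw [← mul_assoc, hu2, one_mul]

lemma corner_comm_zp (hZ : IsQMat q Z) (hq : q ≠ 0)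
    (hu1 : Z 0 (Fin.last n) * u = 1) (hu2 : u * Z 0 (Fin.last n) = 1) (a b : Fin n) :
    Z 0 (Fin.last n) * zp q Z u a b = zp q Z u a b * Z 0 (Fin.last n) := by
  obtain ⟨hrow, hcol, hanti, hdiag⟩ := hZ
  have h1 : Z 0 (Fin.last n) * Z a.succ b.castSucc
      = Z a.succ b.castSucc * Z 0 (Fin.last n) :=
    hanti 0 a.succ b.castSucc (Fin.last n) (Fin.succ_pos a) (Fin.castSucc_lt_last b)
  have hrow0 : Z 0 b.castSucc * Z 0 (Fin.last n)
      = q • (Z 0 (Fin.last n) * Z 0 b.castSucc) :=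
    hrow 0 b.castSucc (Fin.last n) (Fin.castSucc_lt_last b)
  have hcolL : Z 0 (Fin.last n) * Z a.succ (Fin.last n)
      = q • (Z a.succ (Fin.last n) * Z 0 (Fin.last n)) :=
    hcol 0 a.succ (Fin.last n) (Fin.succ_pos a)
  have h2 : Z 0 (Fin.last n) * (Z 0 b.castSucc * Z a.succ (Fin.last n) * u)
      = Z 0 b.castSucc * Z a.succ (Fin.last n) := by
    have e1 : Z 0 (Fin.last n) * Z 0 b.castSucc
        = q⁻¹ • (Z 0 b.castSucc * Z 0 (Fin.last n)) := by
      rw [hrow0, smul_smul, inv_mul_cancel₀ hq, one_smul]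
    calc Z 0 (Fin.last n) * (Z 0 b.castSucc * Z a.succ (Fin.last n) * u)
        = (Z 0 (Fin.last n) * Z 0 b.castSucc) * (Z a.succ (Fin.last n) * u) := by
          simp only [mul_assoc]
      _ = q⁻¹ • (Z 0 b.castSucc * ((Z 0 (Fin.last n) * Z a.succ (Fin.last n)) * u)) := by
          rw [e1, smul_mul_assoc]
          simp only [mul_assoc]
      _ = (q⁻¹ * q) • (Z 0 b.castSucc * (Z a.succ (Fin.last n) * (Z 0 (Fin.last n) * u))) := by
          rw [hcolL, smul_mul_assoc, mul_smul_comm, smul_smul]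
          simp only [mul_assoc]
      _ = Z 0 b.castSucc * Z a.succ (Fin.last n) := by
          rw [inv_mul_cancel₀ hq, one_smul, hu1, mul_one]
  have h3 : (Z 0 b.castSucc * Z a.succ (Fin.last n) * u) * Z 0 (Fin.last n)
      = Z 0 b.castSucc * Z a.succ (Fin.last n) := by
    rw [mul_assoc, hu2, mul_one]
  rw [zp, mul_sub, sub_mul, h1, mul_smul_comm, smul_mul_assoc, h2, h3]

lemma zp_left_form (hZ : IsQMat q Z) (hq : q ≠ 0)
    (hu1 : Z 0 (Fin.last n) * u = 1) (hu2 : u * Z 0 (Fin.last n) = 1) (a b : Fin n) :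
    zp q Z u a b = (q⁻¹ * q⁻¹) •
      (Z a.succ b.castSucc - Z a.succ (Fin.last n) * u * Z 0 b.castSucc) := by
  obtain ⟨hrow, hcol, hanti, hdiag⟩ := hZ
  have hrow0 : Z 0 b.castSucc * Z 0 (Fin.last n)
      = q • (Z 0 (Fin.last n) * Z 0 b.castSucc) :=
    hrow 0 b.castSucc (Fin.last n) (Fin.castSucc_lt_last b)
  have step1 : u * Z 0 b.castSucc = q • (Z 0 b.castSucc * u) :=
    hu_gen hu1 hu2 q _ hrow0
  have hdiag1 : Z 0 b.castSucc * Z a.succ (Fin.last n)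
        - Z a.succ (Fin.last n) * Z 0 b.castSucc
      = (q - q⁻¹) • (Z 0 (Fin.last n) * Z a.succ b.castSucc) :=
    hdiag 0 a.succ b.castSucc (Fin.last n) (Fin.succ_pos a) (Fin.castSucc_lt_last b)
  have step4 : (Z 0 (Fin.last n) * Z a.succ b.castSucc) * u = Z a.succ b.castSucc := by
    rw [hanti 0 a.succ b.castSucc (Fin.last n) (Fin.succ_pos a) (Fin.castSucc_lt_last b),
      mul_assoc, hu1, mul_one]
  have step2 : Z a.succ (Fin.last n) * u * Z 0 b.castSucc
      = q • (Z 0 b.castSucc * Z a.succ (Fin.last n) * u)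
        - (q * (q - q⁻¹)) • Z a.succ b.castSucc := by
    have e : Z a.succ (Fin.last n) * Z 0 b.castSucc
        = Z 0 b.castSucc * Z a.succ (Fin.last n)
          - (q - q⁻¹) • (Z 0 (Fin.last n) * Z a.succ b.castSucc) := by
      rw [← hdiag1]; abel
    calc Z a.succ (Fin.last n) * u * Z 0 b.castSucc
        = Z a.succ (Fin.last n) * (u * Z 0 b.castSucc) := by rw [mul_assoc]
      _ = q • (Z a.succ (Fin.last n) * Z 0 b.castSucc * u) := by
          rw [step1, mul_smul_comm]
          simp only [mul_assoc]
      _ = q • ((Z 0 b.castSucc * Z a.succ (Fin.last n)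
            - (q - q⁻¹) • (Z 0 (Fin.last n) * Z a.succ b.castSucc)) * u) := by
          rw [e]
      _ = q • (Z 0 b.castSucc * Z a.succ (Fin.last n) * u)
            - (q * (q - q⁻¹)) • ((Z 0 (Fin.last n) * Z a.succ b.castSucc) * u) := by
          rw [sub_mul, smul_sub, smul_mul_assoc, smul_smul, mul_smul]
      _ = _ := by rw [step4]
  rw [zp, step2]
  match_scalars <;> field_simp <;> ring


lemma castSucc_succAbove_last {m : ℕ} (c : Fin (m+1)) :
    (c.castSucc).succAbove (Fin.last m) = Fin.last (m+1) := by
  apply Fin.ext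
  have := c.isLt
  simp only [val_succAbove, Fin.val_last, Fin.coe_castSucc]
  all_goals split_ifs <;> omega

lemma castSucc_succAbove_castSucc {m : ℕ} (c : Fin (m+1)) (b : Fin m) :
    (c.castSucc).succAbove b.castSucc = (c.succAbove b).castSucc := by
  apply Fin.ext
  simp only [val_succAbove, Fin.coe_castSucc]
  all_goals split_ifs <;> omega

lemma reduction (hq : q ≠ 0) :
    ∀ (n : ℕ) (Z : Fin (n+1) → Fin (n+1) → B), IsQMat q Z → ∀ u : B,
      Z 0 (Fin.last n) * u = 1 → u * Z 0 (Fin.last n) = 1 →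
      qdet q (zp q Z u) * Z 0 (Fin.last n) = ((-q) ^ (-(n:ℤ))) • qdet q Z := by
  intro n
  induction n with
  | zero =>
      intro Z hZ u hu1 hu2
      rw [qdet_fin_zero, one_mul, qdet_fin_one]
      norm_num
  | succ m IH =>
      intro Z hZ u hu1 hu2
      have hZ' := hZ
      obtain ⟨hrow, hcol, hanti, hdiag⟩ := hZ
      have hnq : (-q) ≠ 0 := neg_ne_zero.mpr hq
      -- the inner minors are the prime matrices of the column submatrices
      have hinner : ∀ c : Fin (m+1), (fun a b : Fin m => zp q Z u a.succ (c.succAbove b))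
          = zp q (fun a b : Fin (m+1) =>
              Z ((1 : Fin (m+2)).succAbove a) ((c.castSucc).succAbove b)) u := by
        intro c
        funext a b
        simp only [zp, succAbove_one_succ, succAbove_one_zero, castSucc_succAbove_last,
          castSucc_succAbove_castSucc]
      have hIH : ∀ c : Fin (m+1),
          qdet q (fun a b : Fin m => zp q Z u a.succ (c.succAbove b)) * Z 0 (Fin.last (m+1))
            = ((-q) ^ (-(m:ℤ))) • m2 q Z c.castSucc := by
        intro c
        rw [hinner c]
        have hW : IsQMat q (fun a b : Fin (m+1) =>
            Z ((1 : Fin (m+2)).succAbove a) ((c.castSucc).succAbove b)) :=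
          isQMat_comp q hZ' (Fin.strictMono_succAbove _) (Fin.strictMono_succAbove _)
        have hb1 : (fun a b : Fin (m+1) =>
            Z ((1 : Fin (m+2)).succAbove a) ((c.castSucc).succAbove b)) 0 (Fin.last m) * u
              = 1 := by
          simp only [succAbove_one_zero, castSucc_succAbove_last]
          exact hu1
        have hb2 : u * (fun a b : Fin (m+1) =>
            Z ((1 : Fin (m+2)).succAbove a) ((c.castSucc).succAbove b)) 0 (Fin.last m)
              = 1 := by
          simp only [succAbove_one_zero, castSucc_succAbove_last]
          exact hu2
        have := IH _ hW u hb1 hb2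
        simp only [succAbove_one_zero, castSucc_succAbove_last] at this
        rw [this]
        rfl
      -- the key sum evaluation
      have key : ∑ c : Fin (m+1), (-q) ^ (c:ℕ) • (zp q Z u 0 c * m2 q Z c.castSucc)
          = (q⁻¹ * q⁻¹) • ((-q) • qdet q Z) := by
        have hzp0 : ∀ c : Fin (m+1), zp q Z u 0 c = (q⁻¹*q⁻¹) •
            (Z 1 c.castSucc - Z 1 (Fin.last (m+1)) * u * Z 0 c.castSucc) := by
          intro c
          rw [zp_left_form q hZ' hq hu1 hu2 0 c, Fin.succ_zero_eq_one]
        have hd := cramer_diag q hq hZ'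
        have hw := cramer_wrong q hZ'
        rw [Fin.sum_univ_castSucc] at hd hw
        simp only [Fin.coe_castSucc, Fin.val_last] at hd hw
        have hS1 : ∑ c : Fin (m+1), (-q) ^ (c:ℕ) • (Z 1 c.castSucc * m2 q Z c.castSucc)
            = (-q) • qdet q Z
              - (-q) ^ (m+1) • (Z 1 (Fin.last (m+1)) * m2 q Z (Fin.last (m+1))) :=
          eq_sub_of_add_eq hd
        have hS2 : ∑ c : Fin (m+1), (-q) ^ (c:ℕ) • (Z 0 c.castSucc * m2 q Z c.castSucc)
            = -((-q) ^ (m+1) • (Z 0 (Fin.last (m+1)) * m2 q Z (Fin.last (m+1)))) :=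
          eq_neg_of_add_eq_zero_left hw
        calc ∑ c : Fin (m+1), (-q) ^ (c:ℕ) • (zp q Z u 0 c * m2 q Z c.castSucc)
            = ∑ c : Fin (m+1), (q⁻¹*q⁻¹) •
                ((-q) ^ (c:ℕ) • (Z 1 c.castSucc * m2 q Z c.castSucc)
                  - (-q) ^ (c:ℕ) • ((Z 1 (Fin.last (m+1)) * u)
                      * (Z 0 c.castSucc * m2 q Z c.castSucc))) := by
              apply Finset.sum_congr rfl
              intro c _
              rw [hzp0 c, smul_mul_assoc, sub_mul, smul_comm, smul_sub]
              simp only [mul_assoc]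
          _ = (q⁻¹*q⁻¹) •
              ((∑ c : Fin (m+1), (-q) ^ (c:ℕ) • (Z 1 c.castSucc * m2 q Z c.castSucc))
                - (Z 1 (Fin.last (m+1)) * u) * ∑ c : Fin (m+1),
                    (-q) ^ (c:ℕ) • (Z 0 c.castSucc * m2 q Z c.castSucc)) := by
              rw [← Finset.smul_sum, Finset.sum_sub_distrib, Finset.mul_sum]
              congr 2
              apply Finset.sum_congr rfl
              intro c _
              rw [mul_smul_comm]
          _ = (q⁻¹*q⁻¹) • ((-q) • qdet q Z) := by
              rw [hS1, hS2, mul_neg, mul_smul_comm]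
              have : Z 1 (Fin.last (m+1)) * u
                  * (Z 0 (Fin.last (m+1)) * m2 q Z (Fin.last (m+1)))
                  = Z 1 (Fin.last (m+1)) * m2 q Z (Fin.last (m+1)) := by
                rw [mul_assoc, ← mul_assoc u, hu2, one_mul]
              rw [this, sub_neg_eq_add, sub_add_cancel]
      calc qdet q (zp q Z u) * Z 0 (Fin.last (m+1))
          = ∑ c : Fin (m+1), (-q) ^ (c:ℕ) • (zp q Z u 0 c *
              ((qdet q fun a b : Fin m => zp q Z u a.succ (c.succAbove b))
                * Z 0 (Fin.last (m+1)))) := by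
            rw [qdet_laplace, Finset.sum_mul]
            apply Finset.sum_congr rfl
            intro c _
            rw [smul_mul_assoc, mul_assoc]
        _ = ∑ c : Fin (m+1), (-q) ^ (c:ℕ) • (zp q Z u 0 c *
              (((-q) ^ (-(m:ℤ))) • m2 q Z c.castSucc)) := by
            apply Finset.sum_congr rfl
            intro c _
            rw [hIH c]
        _ = ((-q) ^ (-(m:ℤ))) • ∑ c : Fin (m+1), (-q) ^ (c:ℕ) •
              (zp q Z u 0 c * m2 q Z c.castSucc) := by
            rw [Finset.smul_sum]
            apply Finset.sum_congr rfl
            intro c _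
            rw [mul_smul_comm, smul_comm]
        _ = ((-q) ^ (-((m:ℤ)+1))) • qdet q Z := by
            rw [key, smul_smul, smul_smul]
            congr 1
            have h1 : ((-q) ^ ((m:ℤ))) ≠ 0 := zpow_ne_zero _ hnq
            rw [zpow_neg, show -((m:ℤ)+1) = -((m:ℤ)+1) from rfl]
            rw [show ((m:ℤ)+1) = (m:ℤ)+1 from rfl, zpow_neg, zpow_add₀ hnq _ 1, zpow_one]
            field_simp
        _ = ((-q) ^ (-((m+1:ℕ):ℤ))) • qdet q Z := by
            norm_num

end Main

end QRed

/-- Reduction theorem: in `O_q(M_n)[X_{1n}⁻¹]` one has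
`(det_q X') X_{1n} = X_{1n} (det_q X') = (-q)^{1-n} det_q X`. -/
theorem detq_reduction {k B : Type*} [Field k] [Ring B] [Algebra k B]
    (q : k) (hq : q ≠ 0) {n : ℕ} (hn : 2 ≤ n)
    (φ : OqM k q n n →ₐ[k] B) (hφ : Function.Injective φ) (u : B)
    (hu1 : φ (qX k q n n ⟨0, by omega⟩ ⟨n - 1, by omega⟩) * u = 1)
    (hu2 : u * φ (qX k q n n ⟨0, by omega⟩ ⟨n - 1, by omega⟩) = 1)
    (hloc : ∀ b : B, ∃ (a : OqM k q n n) (p : ℕ), b = φ a * u ^ p) :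
    qdet q (fun (a b : Fin (n - 1)) =>
          Xp q (by omega) (by omega) φ u ⟨(a : ℕ) + 1, by have := a.isLt; omega⟩
            ⟨(b : ℕ), by have := b.isLt; omega⟩) *
        φ (qX k q n n ⟨0, by omega⟩ ⟨n - 1, by omega⟩)
      = φ (qX k q n n ⟨0, by omega⟩ ⟨n - 1, by omega⟩) *
          qdet q (fun (a b : Fin (n - 1)) =>
            Xp q (by omega) (by omega) φ u ⟨(a : ℕ) + 1, by have := a.isLt; omega⟩
              ⟨(b : ℕ), by have := b.isLt; omega⟩) ∧
    qdet q (fun (a b : Fin (n - 1)) =>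
          Xp q (by omega) (by omega) φ u ⟨(a : ℕ) + 1, by have := a.isLt; omega⟩
            ⟨(b : ℕ), by have := b.isLt; omega⟩) *
        φ (qX k q n n ⟨0, by omega⟩ ⟨n - 1, by omega⟩)
      = ((-q) ^ ((1 : ℤ) - (n : ℤ))) •
          qdet q (fun i j => φ (qX k q n n i j)) := by
  obtain ⟨m, rfl⟩ : ∃ m, n = m + 2 := ⟨n - 2, by omega⟩
  set Z : Fin (m+2) → Fin (m+2) → B := fun i j => φ (qX k q (m+2) (m+2) i j) with hZdef
  have hq0 : (⟨0, by omega⟩ : Fin (m+2)) = 0 := by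
    apply Fin.ext; simp
  have hqL : (⟨m+2-1, by omega⟩ : Fin (m+2)) = Fin.last (m+1) := by
    apply Fin.ext; simp
  have hcorner : φ (qX k q (m+2) (m+2) ⟨0, by omega⟩ ⟨m+2-1, by omega⟩)
      = Z 0 (Fin.last (m+1)) := by
    rw [hq0, hqL]
  rw [hcorner] at hu1 hu2
  have gen : ∀ (x y : FreeAlgebra k (Fin (m+2) × Fin (m+2))), QMRel k q (m+2) (m+2) x y →
      φ (RingQuot.mkAlgHom k (QMRel k q (m+2) (m+2)) x)
        = φ (RingQuot.mkAlgHom k (QMRel k q (m+2) (m+2)) y) :=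
    fun x y h => congrArg φ (RingQuot.mkAlgHom_rel k h)
  have hZq : IsQMat q Z := by
    refine ⟨fun i j l h => ?_, fun i r j h => ?_, fun i r j l h1 h2 => ?_,
      fun i r j l h1 h2 => ?_⟩
    · have e := gen _ _ (QMRel.row i j l h)
      simp only [map_mul, map_smul] at e
      simpa only [hZdef, qX, map_mul, map_smul] using e
    · have e := gen _ _ (QMRel.col i r j h)
      simp only [map_mul, map_smul] at e
      simpa only [hZdef, qX, map_mul, map_smul] using e
    · have e := gen _ _ (QMRel.anti i r j l h1 h2)
      simp only [map_mul] at e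
      simpa only [hZdef, qX, map_mul] using e
    · have e := gen _ _ (QMRel.diag i r j l h1 h2)
      simp only [map_mul, map_add, map_smul] at e
      simp only [hZdef, qX, map_mul, map_add, map_smul]
      exact sub_eq_iff_eq_add.mpr (e.trans (add_comm _ _))
  have hmat : (fun (a b : Fin (m+2-1)) =>
      Xp q (by omega) (by omega) φ u ⟨(a : ℕ) + 1, by have := a.isLt; omega⟩
        ⟨(b : ℕ), by have := b.isLt; omega⟩) = QRed.zp q Z u := by
    funext a b
    simp only [Xp, QRed.zp, hq0, hqL, hZdef]
    rfl
  rw [hmat, hcorner]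
  constructor
  · exact (QRed.commute_qdet q
      (fun a b => QRed.corner_comm_zp q hZq hq hu1 hu2 a b)).symm
  · have hred := QRed.reduction q hq (m+1) Z hZq u hu1 hu2
    rw [hred, show (1 : ℤ) - ((m+2 : ℕ) : ℤ) = -((m+1 : ℕ) : ℤ) by push_cast; ring]
end
end

section
/- Let R be a noetherian domain with division ring of fractions Q, and let x be a nonzero normal element of R with associated automorphism τ (so ax = xτ(a) for all a ∈ R). Assume: (1) xR = p₁ ∩ ⋯ ∩ p_r where each p_i is a completely prime ideal of R with τ(p_i) ⊆ p_i, and (2) the localisation R_x at powers of x is a maximal order in Q. Then R is a maximal order in Q. -/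
noncomputable section

/-- A subring `S` of a division ring `Q` (of which `Q` is the division ring of fractions)
is a maximal order if every ring `T` with `S ⊆ T ⊆ Q` such that `aTb ⊆ S` for some nonzero
`a, b ∈ S` equals `S`. -/
def IsMaximalOrderIn {Q : Type*} [DivisionRing Q] (S : Subring Q) : Prop :=
  ∀ T : Subring Q, S ≤ T →
    (∃ a ∈ S, ∃ b ∈ S, a ≠ 0 ∧ b ≠ 0 ∧ ∀ t ∈ T, a * t * b ∈ S) → T = S

private lemma iter_map_mul {R : Type*} [Ring R] (σ : R ≃+* R) :
    ∀ (k : ℕ) (a b : R), (⇑σ)^[k] (a * b) = (⇑σ)^[k] a * (⇑σ)^[k] b := by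
  intro k
  induction k with
  | zero => intro a b; rfl
  | succ n ih =>
    intro a b
    rw [Function.iterate_succ_apply, Function.iterate_succ_apply,
      Function.iterate_succ_apply, map_mul, ih]

private lemma iter_map_add {R : Type*} [Ring R] (σ : R ≃+* R) :
    ∀ (k : ℕ) (a b : R), (⇑σ)^[k] (a + b) = (⇑σ)^[k] a + (⇑σ)^[k] b := by
  intro k
  induction k with
  | zero => intro a b; rfl
  | succ n ih =>
    intro a b
    rw [Function.iterate_succ_apply, Function.iterate_succ_apply,
      Function.iterate_succ_apply, map_add, ih]

private lemma iter_map_zero {R : Type*} [Ring R] (σ : R ≃+* R) :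
    ∀ (k : ℕ), (⇑σ)^[k] (0 : R) = 0 := by
  intro k
  induction k with
  | zero => rfl
  | succ n ih => rw [Function.iterate_succ_apply, map_zero, ih]

/-- If a noetherian-ring ideal-like set is stable under an automorphism `σ`,
it is stable under `σ.symm`. -/
private lemma stab_lemma {R : Type*} [Ring R] [IsNoetherianRing R]
    (σ : R ≃+* R) (S : Set R) (h0 : (0:R) ∈ S)
    (hadd : ∀ a b : R, a ∈ S → b ∈ S → a + b ∈ S)
    (hmul : ∀ u a : R, a ∈ S → u * a ∈ S)
    (hσ : ∀ a ∈ S, σ a ∈ S) :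
    ∀ a ∈ S, σ.symm a ∈ S := by
  let Jfun : ℕ → Ideal R := fun k =>
    { carrier := {u : R | (⇑σ)^[k] u ∈ S}
      add_mem' := fun ha hb => by
        simp only [Set.mem_setOf_eq, iter_map_add] at *
        exact hadd _ _ ha hb
      zero_mem' := by simp only [Set.mem_setOf_eq, iter_map_zero]; exact h0
      smul_mem' := fun u a ha => by
        simp only [Set.mem_setOf_eq, smul_eq_mul, iter_map_mul] at *
        exact hmul _ _ ha }
  have hmem : ∀ k (u : R), u ∈ Jfun k ↔ (⇑σ)^[k] u ∈ S := fun k u => Iff.rfl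
  have hJmono : Monotone Jfun := by
    apply monotone_nat_of_le_succ
    intro k u hu
    rw [hmem] at *
    rw [Function.iterate_succ_apply']
    exact hσ _ hu
  obtain ⟨N, hN⟩ := monotone_stabilizes_iff_noetherian.mpr inferInstance ⟨Jfun, hJmono⟩
  intro a ha
  have hli : Function.LeftInverse ⇑σ ⇑σ.symm := σ.apply_symm_apply
  have h1 : (⇑σ)^[N+2] ((⇑σ.symm)^[N+2] a) = a := (hli.iterate (N+2)) a
  have h2 : ((⇑σ.symm)^[N+2] a) ∈ Jfun (N+2) := by rw [hmem, h1]; exact ha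
  have e1 : Jfun N = Jfun (N+2) := hN (N+2) (by omega)
  have e2 : Jfun N = Jfun (N+1) := hN (N+1) (by omega)
  have h3 : ((⇑σ.symm)^[N+2] a) ∈ Jfun (N+1) := by rw [← e2, e1]; exact h2
  have h4 : (⇑σ)^[N+1] ((⇑σ.symm)^[N+2] a) ∈ S := h3
  have h5 : (⇑σ)^[N+1] ((⇑σ.symm)^[N+2] a) = σ.symm a := by
    have : (⇑σ.symm)^[N+2] a = (⇑σ.symm)^[N+1] (σ.symm a) := by
      rw [Function.iterate_succ_apply]
    rw [this]
    exact (hli.iterate (N+1)) (σ.symm a)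
  rwa [h5] at h4

set_option maxHeartbeats 2000000 in
/-- Let `R` be a noetherian domain with division ring of fractions `Q` (embedded via `f`),
and `x` a nonzero normal element of `R` with associated automorphism `τ`. If
`xR = p₁ ∩ ⋯ ∩ p_r` with each `p_i` a completely prime ideal satisfying `τ(p_i) ⊆ p_i`,
and the localisation `R_x` is a maximal order in `Q`, then `R` is a maximal order in `Q`. -/
theorem maximal_order_of_localisation {R Q : Type*} [Ring R] [IsDomain R]
    [IsNoetherianRing R] [IsNoetherianRing Rᵐᵒᵖ] [DivisionRing Q]
    (f : R →+* Q) (hf : Function.Injective f)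
    (hQ : ∀ y : Q, ∃ a b : R, b ≠ 0 ∧ y = f a * (f b)⁻¹)
    (x : R) (hx : x ≠ 0)
    (τ : R ≃+* R) (hτ : ∀ a : R, a * x = x * τ a)
    (r : ℕ) (p : Fin r → TwoSidedIdeal R)
    (hproper : ∀ i, (1 : R) ∉ p i)
    (hcp : ∀ i, ∀ a b : R, a * b ∈ p i → a ∈ p i ∨ b ∈ p i)
    (hcap : ∀ y : R, (∃ a : R, y = x * a) ↔ ∀ i, y ∈ p i)
    (hτp : ∀ i, ∀ a ∈ p i, τ a ∈ p i)
    (Rx : Subring Q) (hRle : f.range ≤ Rx) (hxinv : (f x)⁻¹ ∈ Rx)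
    (hRx : ∀ t ∈ Rx, ∃ (a : R) (j : ℕ), t = f a * ((f x)⁻¹) ^ j)
    (hmax : IsMaximalOrderIn Rx) :
    IsMaximalOrderIn f.range := by
  classical
  intro T hT hbd
  obtain ⟨α, hαmem, β, hβmem, hα0, hβ0, hb⟩ := hbd
  obtain ⟨a₀, rfl⟩ := hαmem
  obtain ⟨b₀, rfl⟩ := hβmem
  -- basic notation
  set X : Q := f x with hXdef
  set Xi : Q := (f x)⁻¹ with hXidef
  have hXne : X ≠ 0 := by
    rw [hXdef]
    intro h
    exact hx (hf (h.trans (map_zero f).symm))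
  have hXi_eq : Xi = X⁻¹ := by rw [hXidef, hXdef]
  have hXXi : X * Xi = 1 := by rw [hXi_eq]; exact mul_inv_cancel₀ hXne
  have hXiX : Xi * X = 1 := by rw [hXi_eq]; exact inv_mul_cancel₀ hXne
  have XiXcancel : ∀ w : Q, Xi * (X * w) = w := fun w => by
    rw [← mul_assoc, hXiX, one_mul]
  have XXicancel : ∀ w : Q, X * (Xi * w) = w := fun w => by
    rw [← mul_assoc, hXXi, one_mul]
  have cancelXXi : ∀ w : Q, w * X * Xi = w := fun w => by
    rw [mul_assoc, hXXi, mul_one]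
  have cancelXiX : ∀ w : Q, w * Xi * X = w := fun w => by
    rw [mul_assoc, hXiX, mul_one]
  have comm1 : ∀ u : R, f u * X = X * f (τ u) := fun u => by
    rw [hXdef, ← map_mul, ← map_mul, hτ]
  have comm2 : ∀ u : R, Xi * f u = f (τ u) * Xi := fun u => by
    calc Xi * f u = Xi * f u * X * Xi := (cancelXXi _).symm
      _ = Xi * (f u * X) * Xi := by rw [mul_assoc Xi (f u) X]
      _ = Xi * (X * f (τ u)) * Xi := by rw [comm1]
      _ = f (τ u) * Xi := by rw [← mul_assoc, hXiX, one_mul]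
  have comm2' : ∀ u : R, f u * Xi = Xi * f (τ.symm u) := fun u => by
    have h := comm2 (τ.symm u)
    rw [RingEquiv.apply_symm_apply] at h
    exact h.symm
  have comm3 : ∀ (k : ℕ) (u : R), Xi ^ k * f u = f ((⇑τ)^[k] u) * Xi ^ k := by
    intro k
    induction k with
    | zero => intro u; simp
    | succ n ih =>
      intro u
      calc Xi^(n+1) * f u = Xi^n * (Xi * f u) := by rw [pow_succ, mul_assoc]
        _ = Xi^n * (f (τ u) * Xi) := by rw [comm2]
        _ = (Xi^n * f (τ u)) * Xi := by rw [mul_assoc]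
        _ = f ((⇑τ)^[n] (τ u)) * Xi^n * Xi := by rw [ih]
        _ = f ((⇑τ)^[n+1] u) * Xi^(n+1) := by
            rw [Function.iterate_succ_apply, pow_succ, mul_assoc]
  have comm3' : ∀ (k : ℕ) (u : R), f u * Xi ^ k = Xi ^ k * f ((⇑τ.symm)^[k] u) := by
    intro k
    induction k with
    | zero => intro u; simp
    | succ n ih =>
      intro u
      calc f u * Xi^(n+1) = (f u * Xi^n) * Xi := by rw [pow_succ, mul_assoc]
        _ = Xi^n * f ((⇑τ.symm)^[n] u) * Xi := by rw [ih]
        _ = Xi^n * (f ((⇑τ.symm)^[n] u) * Xi) := by rw [mul_assoc]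
        _ = Xi^n * (Xi * f (τ.symm ((⇑τ.symm)^[n] u))) := by rw [comm2']
        _ = Xi^(n+1) * f ((⇑τ.symm)^[n+1] u) := by
            rw [Function.iterate_succ_apply', pow_succ, mul_assoc]
  have comm4 : ∀ (k : ℕ) (u : R), f u * X ^ k = X ^ k * f ((⇑τ)^[k] u) := by
    intro k
    induction k with
    | zero => intro u; simp
    | succ n ih =>
      intro u
      calc f u * X ^ (n+1) = (f u * X ^ n) * X := by rw [pow_succ, mul_assoc]
        _ = X ^ n * f ((⇑τ)^[n] u) * X := by rw [ih]
        _ = X ^ n * (f ((⇑τ)^[n] u) * X) := by rw [mul_assoc]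
        _ = X ^ n * (X * f (τ ((⇑τ)^[n] u))) := by rw [comm1]
        _ = X ^ (n+1) * f ((⇑τ)^[n+1] u) := by
            rw [Function.iterate_succ_apply', pow_succ, mul_assoc]
  have hxcomm : ∀ u : R, x * u = τ.symm u * x := fun u => by
    have h := hτ (τ.symm u)
    rw [RingEquiv.apply_symm_apply] at h
    exact h.symm
  have hdiv : ∀ g c : R, f g = f c * X → g = c * x := fun g c h =>
    hf (h.trans (by rw [hXdef, ← map_mul]))
  have hτx : τ x = x := (mul_left_cancel₀ hx (hτ x)).symm
  -- p is τ-stable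
  have hptau : ∀ i (u : R), τ u ∈ p i ↔ u ∈ p i := by
    intro i
    have hstab := stab_lemma τ {u : R | u ∈ p i} ((p i).zero_mem)
      (fun a b ha hb => (p i).add_mem ha hb)
      (fun u a ha => (p i).mul_mem_left u a ha)
      (hτp i)
    intro u
    constructor
    · intro h
      have h2 := hstab (τ u) h
      simpa using h2
    · exact hτp i u
  -- the key divisibility lemma
  have memx_iff : ∀ y : R, (∃ c : R, y = x * c) ↔ (∃ c : R, y = c * x) := by
    intro y
    constructor
    · rintro ⟨c, rfl⟩; exact ⟨τ.symm c, hxcomm c⟩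
    · rintro ⟨c, rfl⟩; exact ⟨τ c, hτ c⟩
  have KL : ∀ g h₂ : R, g * τ g = h₂ * x → ∃ g₂ : R, g = x * g₂ := by
    intro g h₂ hrel
    have hmem : ∀ i, g * τ g ∈ p i := by
      have : ∃ c, g * τ g = x * c := by
        rw [hrel]; exact (memx_iff _).2 ⟨h₂, rfl⟩
      exact (hcap _).1 this
    have hmem2 : ∀ i, g ∈ p i := by
      intro i
      rcases hcp i g (τ g) (hmem i) with h | h
      · exact h
      · exact (hptau i g).1 h
    exact (hcap g).2 hmem2
  have KLr : ∀ g h₂ : R, g * τ g = h₂ * x → ∃ g₂ : R, g = g₂ * x := fun g h₂ h =>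
    (memx_iff g).1 (KL g h₂ h)
  -- junction helpers
  have junctionR : ∀ (w : Q) (h₁ h₂ : R), w = f h₁ * Xi → w * w * X = f h₂ →
      ∃ h₃, w = f h₃ := by
    intro w h₁ h₂ hw hrel
    have e1 : w * w * X = f (h₁ * τ h₁) * Xi := by
      rw [hw]
      calc f h₁ * Xi * (f h₁ * Xi) * X
          = f h₁ * (Xi * (f h₁ * (Xi * X))) := by simp only [mul_assoc]
        _ = f h₁ * (Xi * f h₁) := by rw [hXiX, mul_one]
        _ = f h₁ * (f (τ h₁) * Xi) := by rw [comm2]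
        _ = f h₁ * f (τ h₁) * Xi := by rw [mul_assoc]
        _ = f (h₁ * τ h₁) * Xi := by rw [← map_mul]
    have e2 : f (h₁ * τ h₁) = f h₂ * X := by
      have : f h₂ = f (h₁ * τ h₁) * Xi := by rw [← hrel, e1]
      rw [this, cancelXiX]
    have e3 : h₁ * τ h₁ = h₂ * x := hdiv _ _ e2
    obtain ⟨h₃, hh₃⟩ := KLr h₁ h₂ e3
    refine ⟨h₃, ?_⟩
    rw [hw, hh₃, map_mul, ← hXdef, mul_assoc, hXXi, mul_one]
  have junctionL : ∀ (v : Q) (g g' : R), v = Xi * f g → f g' = f g * v →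
      ∃ g₃, v = f g₃ := by
    intro v g g' hv hrel
    have e1 : f g * v = f (g * τ g) * Xi := by
      rw [hv]
      calc f g * (Xi * f g) = f g * (f (τ g) * Xi) := by rw [comm2]
        _ = f g * f (τ g) * Xi := by rw [mul_assoc]
        _ = f (g * τ g) * Xi := by rw [← map_mul]
    have e2 : f (g * τ g) = f g' * X := by
      rw [hrel, e1, cancelXiX]
    have e3 : g * τ g = g' * x := hdiv _ _ e2
    obtain ⟨g₃, hg₃⟩ := KL g g' e3
    refine ⟨g₃, ?_⟩
    rw [hv, hg₃, map_mul, ← hXdef, XiXcancel]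
  -- elements of R are in T
  have hfRleT : ∀ u : R, f u ∈ T := fun u => hT ⟨u, rfl⟩
  -- conductor A
  set A : Set R := {u : R | ∀ t ∈ T, ∃ c : R, f u * t * f b₀ = f c} with hAdef
  have hA_a : a₀ ∈ A := by
    intro t ht
    obtain ⟨c, hc⟩ := hb t ht
    exact ⟨c, hc.symm⟩
  have hA0 : (0:R) ∈ A := fun t ht => ⟨0, by simp⟩
  have hAadd : ∀ u v : R, u ∈ A → v ∈ A → u + v ∈ A := by
    intro u v hu hv t ht
    obtain ⟨c, hc⟩ := hu t ht
    obtain ⟨d, hd⟩ := hv t ht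
    exact ⟨c + d, by rw [map_add, add_mul, add_mul, hc, hd, map_add]⟩
  have hAmulL : ∀ u v : R, v ∈ A → u * v ∈ A := by
    intro u v hv t ht
    obtain ⟨c, hc⟩ := hv t ht
    refine ⟨u * c, ?_⟩
    rw [map_mul, map_mul, mul_assoc (f u) (f v) t, mul_assoc (f u) (f v * t) (f b₀), hc]
  have hAmulR : ∀ u v : R, u ∈ A → u * v ∈ A := by
    intro u v hu t ht
    obtain ⟨c, hc⟩ := hu (f v * t) (T.mul_mem (hfRleT v) ht)
    refine ⟨c, ?_⟩
    rw [map_mul, mul_assoc (f u) (f v) t, ← hc, ← mul_assoc]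
  have hAτ : ∀ u ∈ A, τ u ∈ A := by
    intro u hu t ht
    obtain ⟨g, hg⟩ := hu (X * t) (T.mul_mem (hfRleT x) ht)
    -- v := f (τ u) * t * f b₀ = Xi * f g
    have hfτu : f (τ u) = Xi * f u * X := by rw [comm2, cancelXiX]
    have hv : f (τ u) * t * f b₀ = Xi * f g := by
      rw [← hg, hfτu]
      simp only [mul_assoc]
    -- product element
    obtain ⟨g', hg'⟩ := hu (X * (t * f (b₀ * τ u) * t))
      (T.mul_mem (hfRleT x) (T.mul_mem (T.mul_mem ht (hfRleT _)) ht))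
    have hrel : f g' = f g * (f (τ u) * t * f b₀) := by
      rw [← hg', ← hg]
      rw [map_mul]
      simp only [mul_assoc]
    obtain ⟨g₃, hg₃⟩ := junctionL (f (τ u) * t * f b₀) g g' hv hrel
    exact ⟨g₃, hg₃⟩
  have hAτs : ∀ u ∈ A, τ.symm u ∈ A :=
    stab_lemma τ A hA0 hAadd hAmulL hAτ
  have hAτsiter : ∀ (k : ℕ) (u : R), u ∈ A → (⇑τ.symm)^[k] u ∈ A := by
    intro k
    induction k with
    | zero => intro u hu; exact hu
    | succ n ih =>
      intro u hu
      rw [Function.iterate_succ_apply']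
      exact hAτs _ (ih u hu)
  -- conductor B
  set B : Set R := {s : R | ∀ t ∈ T, ∀ u ∈ A, ∃ c : R, f u * t * f s = f c} with hBdef
  have hB_b : b₀ ∈ B := fun t ht u hu => hu t ht
  have hB0 : (0:R) ∈ B := fun t ht u hu => ⟨0, by simp⟩
  have hBadd : ∀ s₁ s₂ : R, s₁ ∈ B → s₂ ∈ B → s₁ + s₂ ∈ B := by
    intro s₁ s₂ h1 h2 t ht u hu
    obtain ⟨c, hc⟩ := h1 t ht u hu
    obtain ⟨d, hd⟩ := h2 t ht u hu
    exact ⟨c + d, by rw [map_add, mul_add, hc, hd, map_add]⟩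
  have hBmulL : ∀ u s : R, s ∈ B → u * s ∈ B := by
    intro u s hs t ht v hv
    obtain ⟨c, hc⟩ := hs (t * f u) (T.mul_mem ht (hfRleT u)) v hv
    refine ⟨c, ?_⟩
    rw [map_mul, ← hc]
    simp only [mul_assoc]
  have hBmulR : ∀ s u : R, s ∈ B → s * u ∈ B := by
    intro s u hs t ht v hv
    obtain ⟨c, hc⟩ := hs t ht v hv
    refine ⟨c * u, ?_⟩
    rw [map_mul, map_mul, ← hc]
    simp only [mul_assoc]
  have hBτs : ∀ s ∈ B, τ.symm s ∈ B := by
    intro s hs t ht u hu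
    obtain ⟨h₁, hh₁⟩ := hs (t * X) (T.mul_mem ht (hfRleT x)) u hu
    have hfτss : f (τ.symm s) = X * f s * Xi := by
      have h := comm1 (τ.symm s)
      rw [RingEquiv.apply_symm_apply] at h
      rw [← h, cancelXXi]
    have hw : f u * t * f (τ.symm s) = f h₁ * Xi := by
      rw [← hh₁, hfτss]
      simp only [mul_assoc]
    obtain ⟨h₂, hh₂⟩ := hs ((t * f (τ.symm s * u)) * t * X)
      (T.mul_mem (T.mul_mem (T.mul_mem ht (hfRleT _)) ht) (hfRleT x)) u hu
    have hcs : f (τ.symm s) * X = X * f s := by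
      have h := comm1 (τ.symm s)
      rwa [RingEquiv.apply_symm_apply] at h
    have hrel : (f u * t * f (τ.symm s)) * (f u * t * f (τ.symm s)) * X = f h₂ := by
      rw [← hh₂, map_mul]
      simp only [mul_assoc]
      rw [hcs]
    obtain ⟨h₃, hh₃⟩ := junctionR (f u * t * f (τ.symm s)) h₁ h₂ hw hrel
    exact ⟨h₃, hh₃⟩
  have hBτ : ∀ s ∈ B, τ s ∈ B := by
    have hstab := stab_lemma τ.symm B hB0 hBadd hBmulL hBτs
    intro s hs
    have h := hstab s hs
    simpa using h
  have hBτiter : ∀ (k : ℕ) (s : R), s ∈ B → (⇑τ)^[k] s ∈ B := by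
    intro k
    induction k with
    | zero => intro s hs; exact hs
    | succ n ih =>
      intro s hs
      rw [Function.iterate_succ_apply']
      exact hBτ _ (ih s hs)
  have hXiXpow : ∀ j : ℕ, Xi ^ j * X ^ j = 1 := by
    intro j
    induction j with
    | zero => simp
    | succ n ih =>
      calc Xi ^ (n+1) * X ^ (n+1) = Xi ^ n * Xi * (X * X ^ n) := by
            rw [pow_succ, pow_succ']
        _ = Xi ^ n * (Xi * (X * X ^ n)) := by rw [mul_assoc]
        _ = Xi ^ n * X ^ n := by rw [XiXcancel]
        _ = 1 := ih
  -- ★ : T · f(B) ⊆ Rx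
  have star : ∀ t ∈ T, ∀ s ∈ B, t * f s ∈ Rx := by
    intro t ht s hs
    set G : Set Q := {q : Q | ∃ ρ ∈ Rx, ∃ w ∈ A, q = ρ * f w} with hGdef
    have hGRx : ∀ q ∈ AddSubgroup.closure G, q ∈ Rx := by
      intro q hq
      induction hq using AddSubgroup.closure_induction with
      | mem y hy => obtain ⟨ρ, hρ, w, hw, rfl⟩ := hy; exact Rx.mul_mem hρ (hRle ⟨w, rfl⟩)
      | zero => exact Rx.zero_mem
      | add y z _ _ hy hz => exact Rx.add_mem hy hz
      | neg y _ hy => exact Rx.neg_mem hy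
    have hGenAbs : ∀ q ∈ G, ∀ ρ' ∈ Rx, q * ρ' ∈ AddSubgroup.closure G := by
      rintro q ⟨ρ, hρ, w, hw, rfl⟩ ρ' hρ'
      obtain ⟨c, j, rfl⟩ := hRx ρ' hρ'
      apply AddSubgroup.subset_closure
      refine ⟨ρ * Xi ^ j, Rx.mul_mem hρ (Rx.pow_mem hxinv j),
        (⇑τ.symm)^[j] (w * c), hAτsiter j _ (hAmulR w c hw), ?_⟩
      calc ρ * f w * (f c * Xi ^ j) = ρ * (f w * f c * Xi ^ j) := by
            simp only [mul_assoc]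
        _ = ρ * (f (w * c) * Xi ^ j) := by rw [map_mul]
        _ = ρ * (Xi ^ j * f ((⇑τ.symm)^[j] (w*c))) := by rw [comm3']
        _ = ρ * Xi ^ j * f ((⇑τ.symm)^[j] (w*c)) := by rw [mul_assoc]
    have hAhatAbsRx : ∀ q ∈ AddSubgroup.closure G, ∀ ρ' ∈ Rx,
        q * ρ' ∈ AddSubgroup.closure G := by
      intro q hq
      induction hq using AddSubgroup.closure_induction with
      | mem y hy => exact fun ρ' hρ' => hGenAbs y hy ρ' hρ'
      | zero => exact fun ρ' _ => (by rw [zero_mul]; exact AddSubgroup.zero_mem _)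
      | add y z _ _ hy hz => exact fun ρ' hρ' => (by
          rw [add_mul]; exact AddSubgroup.add_mem _ (hy ρ' hρ') (hz ρ' hρ'))
      | neg y _ hy => exact fun ρ' hρ' => (by
          rw [neg_mul]; exact AddSubgroup.neg_mem _ (hy ρ' hρ'))
    have hGenAbsXi : ∀ q ∈ G, q * (t * f s) ∈ AddSubgroup.closure G := by
      rintro q ⟨ρ, hρ, w, hw, rfl⟩
      obtain ⟨V, hV⟩ := hs t ht w hw
      have hVA : V ∈ A := by
        intro t' ht'
        obtain ⟨c, hc⟩ := hw (t * f s * t') (T.mul_mem (T.mul_mem ht (hfRleT s)) ht')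
        refine ⟨c, ?_⟩
        have h1 : f V * t' * f b₀ = f w * (t * f s * t') * f b₀ := by
          rw [← hV]; simp only [mul_assoc]
        exact h1.trans hc
      apply AddSubgroup.subset_closure
      refine ⟨ρ, hρ, V, hVA, ?_⟩
      rw [← hV]; simp only [mul_assoc]
    have hAhatAbsXi : ∀ q ∈ AddSubgroup.closure G,
        q * (t * f s) ∈ AddSubgroup.closure G := by
      intro q hq
      induction hq using AddSubgroup.closure_induction with
      | mem y hy => exact hGenAbsXi y hy
      | zero => rw [zero_mul]; exact AddSubgroup.zero_mem _
      | add y z _ _ hy hz => rw [add_mul]; exact AddSubgroup.add_mem _ hy hz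
      | neg y _ hy => rw [neg_mul]; exact AddSubgroup.neg_mem _ hy
    set S1 : Subring Q := Subring.closure ((Rx : Set Q) ∪ {t * f s}) with hS1def
    have hS1stab : ∀ w' ∈ S1, ∀ q ∈ AddSubgroup.closure G,
        q * w' ∈ AddSubgroup.closure G := by
      intro w' hw'
      induction hw' using Subring.closure_induction with
      | mem y hy =>
        rcases hy with hy | hy
        · exact fun q hq => hAhatAbsRx q hq y hy
        · rw [Set.mem_singleton_iff] at hy
          subst hy
          exact fun q hq => hAhatAbsXi q hq
      | zero => exact fun q hq => (by rw [mul_zero]; exact AddSubgroup.zero_mem _)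
      | one => exact fun q hq => (by rw [mul_one]; exact hq)
      | add y z _ _ hy hz => exact fun q hq => (by
          rw [mul_add]; exact AddSubgroup.add_mem _ (hy q hq) (hz q hq))
      | neg y _ hy => exact fun q hq => (by
          rw [mul_neg]; exact AddSubgroup.neg_mem _ (hy q hq))
      | mul y z _ _ hy hz => exact fun q hq => (by
          rw [← mul_assoc]; exact hz _ (hy q hq))
    have hfa₀G : f a₀ ∈ AddSubgroup.closure G :=
      AddSubgroup.subset_closure ⟨1, Rx.one_mem, a₀, hA_a, by rw [one_mul]⟩
    have hS1eq : S1 = Rx := by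
      apply hmax S1 (fun q hq => Subring.subset_closure (Set.mem_union_left _ hq))
      refine ⟨f a₀, hRle ⟨a₀, rfl⟩, 1, Rx.one_mem, hα0, one_ne_zero, ?_⟩
      intro w' hw'
      rw [mul_one]
      exact hGRx _ (hS1stab w' hw' (f a₀) hfa₀G)
    have hmemS1 : (t * f s) ∈ S1 :=
      Subring.subset_closure (Set.mem_union_right _ (Set.mem_singleton _))
    rw [hS1eq] at hmemS1
    exact hmemS1
  -- presentation with c ∈ B
  have starB : ∀ t ∈ T, ∀ s ∈ B, ∃ (c : R) (j : ℕ), c ∈ B ∧ t * f s = f c * Xi ^ j := by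
    intro t ht s hs
    obtain ⟨c, j, hcj⟩ := hRx _ (star t ht s hs)
    refine ⟨c, j, ?_, hcj⟩
    have hfc : f c = t * f (s * x ^ j) := by
      have h1 : f c * Xi ^ j * X ^ j = f c := by
        rw [mul_assoc, hXiXpow, mul_one]
      calc f c = f c * Xi ^ j * X ^ j := h1.symm
        _ = t * f s * X ^ j := by rw [← hcj]
        _ = t * (f s * X ^ j) := by rw [mul_assoc]
        _ = t * f (s * x ^ j) := by rw [map_mul, map_pow, ← hXdef]
    intro t' ht' u hu
    obtain ⟨d, hd⟩ := hBmulR s (x ^ j) hs (t' * t) (T.mul_mem ht' ht) u hu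
    refine ⟨d, ?_⟩
    have h2 : f u * t' * f c = f u * (t' * t) * f (s * x ^ j) := by
      rw [hfc]; simp only [mul_assoc]
    exact h2.trans hd
  -- Step 1 : T ⊆ Rx
  have hTRx : ∀ t ∈ T, t ∈ Rx := by
    set GB : Set Q := {q : Q | ∃ s ∈ B, ∃ ρ ∈ Rx, q = f s * ρ} with hGBdef
    have hGBRx : ∀ q ∈ AddSubgroup.closure GB, q ∈ Rx := by
      intro q hq
      induction hq using AddSubgroup.closure_induction with
      | mem y hy =>
        obtain ⟨s, hs, ρ, hρ, rfl⟩ := hy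
        exact Rx.mul_mem (hRle ⟨s, rfl⟩) hρ
      | zero => exact Rx.zero_mem
      | add y z _ _ hy hz => exact Rx.add_mem hy hz
      | neg y _ hy => exact Rx.neg_mem hy
    have hLift : ∀ w : Q, (∀ q ∈ GB, w * q ∈ AddSubgroup.closure GB) →
        ∀ q ∈ AddSubgroup.closure GB, w * q ∈ AddSubgroup.closure GB := by
      intro w hw q hq
      induction hq using AddSubgroup.closure_induction with
      | mem y hy => exact hw y hy
      | zero => rw [mul_zero]; exact AddSubgroup.zero_mem _
      | add y z _ _ hy hz => rw [mul_add]; exact AddSubgroup.add_mem _ hy hz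
      | neg y _ hy => rw [mul_neg]; exact AddSubgroup.neg_mem _ hy
    have hGenRx : ∀ ρ₀ ∈ Rx, ∀ q ∈ GB, ρ₀ * q ∈ AddSubgroup.closure GB := by
      rintro ρ₀ hρ₀ q ⟨s, hs, ρ, hρ, rfl⟩
      obtain ⟨c, j, rfl⟩ := hRx ρ₀ hρ₀
      apply AddSubgroup.subset_closure
      refine ⟨c * (⇑τ)^[j] s, hBmulL c _ (hBτiter j s hs),
        Xi ^ j * ρ, Rx.mul_mem (Rx.pow_mem hxinv j) hρ, ?_⟩
      calc f c * Xi ^ j * (f s * ρ) = f c * (Xi ^ j * f s) * ρ := by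
            simp only [mul_assoc]
        _ = f c * (f ((⇑τ)^[j] s) * Xi ^ j) * ρ := by rw [comm3]
        _ = f (c * (⇑τ)^[j] s) * (Xi ^ j * ρ) := by
            rw [map_mul]; simp only [mul_assoc]
    have hGenT : ∀ t ∈ T, ∀ q ∈ GB, t * q ∈ AddSubgroup.closure GB := by
      rintro t ht q ⟨s, hs, ρ, hρ, rfl⟩
      obtain ⟨c, j, hcB, hcj⟩ := starB t ht s hs
      apply AddSubgroup.subset_closure
      refine ⟨c, hcB, Xi ^ j * ρ, Rx.mul_mem (Rx.pow_mem hxinv j) hρ, ?_⟩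
      rw [← mul_assoc, hcj, mul_assoc]
    have hS2stab : ∀ w ∈ Subring.closure ((Rx : Set Q) ∪ (T : Set Q)),
        ∀ q ∈ AddSubgroup.closure GB, w * q ∈ AddSubgroup.closure GB := by
      intro w hw
      induction hw using Subring.closure_induction with
      | mem y hy =>
        rcases hy with hy | hy
        · exact hLift y (hGenRx y hy)
        · exact hLift y (hGenT y hy)
      | zero => exact fun q hq => (by rw [zero_mul]; exact AddSubgroup.zero_mem _)
      | one => exact fun q hq => (by rw [one_mul]; exact hq)
      | add y z _ _ hy hz => exact fun q hq => (by
          rw [add_mul]; exact AddSubgroup.add_mem _ (hy q hq) (hz q hq))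
      | neg y _ hy => exact fun q hq => (by
          rw [neg_mul]; exact AddSubgroup.neg_mem _ (hy q hq))
      | mul y z _ _ hy hz => exact fun q hq => (by
          rw [mul_assoc]; exact hy _ (hz q hq))
    have hfb₀GB : f b₀ ∈ AddSubgroup.closure GB :=
      AddSubgroup.subset_closure ⟨b₀, hB_b, 1, Rx.one_mem, by rw [mul_one]⟩
    have hS2eq : Subring.closure ((Rx : Set Q) ∪ (T : Set Q)) = Rx := by
      apply hmax _ (fun q hq => Subring.subset_closure (Set.mem_union_left _ hq))
      refine ⟨1, Rx.one_mem, f b₀, hRle ⟨b₀, rfl⟩, one_ne_zero, hβ0, ?_⟩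
      intro w hw
      rw [one_mul]
      exact hGBRx _ (hS2stab w hw (f b₀) hfb₀GB)
    intro t ht
    have hmem : t ∈ Subring.closure ((Rx : Set Q) ∪ (T : Set Q)) :=
      Subring.subset_closure (Set.mem_union_right _ ht)
    rwa [hS2eq] at hmem
  -- monotonicity of denominator bound
  have hDmono : ∀ (q : Q) (m m' : ℕ), m ≤ m' → (∃ c, q * X ^ m = f c) →
      (∃ c, q * X ^ m' = f c) := by
    rintro q m m' hmm ⟨c, hc⟩
    obtain ⟨k, rfl⟩ := Nat.exists_eq_add_of_le hmm
    exact ⟨c * x ^ k, by rw [pow_add, ← mul_assoc, hc, map_mul, map_pow, ← hXdef]⟩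
  -- Step 2 : uniform right denominator bound for T·f(B)
  have step2 : ∃ J : ℕ, ∀ t ∈ T, ∀ s ∈ B, ∃ c, t * f s * X ^ J = f c := by
    set Mset : Set Q := {q : Q | ∃ t ∈ T, ∃ s ∈ B, ∃ u : R, q = f a₀ * (t * f s) * f u}
      with hMdef
    have hE : ∀ y ∈ AddSubgroup.closure Mset, ∃ (m : ℕ) (q : Q),
        y = f a₀ * q ∧ ∃ c, q * X ^ m = f c := by
      intro y hy
      induction hy using AddSubgroup.closure_induction with
      | mem y hy =>
        obtain ⟨t, ht, s, hs, u, rfl⟩ := hy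
        obtain ⟨c, j, hcB, hcj⟩ := starB t ht s hs
        refine ⟨j, (t * f s) * f u, by simp only [mul_assoc], c * (⇑τ)^[j] u, ?_⟩
        calc t * f s * f u * X ^ j = f c * Xi ^ j * f u * X ^ j := by rw [hcj]
          _ = f c * (Xi ^ j * f u) * X ^ j := by simp only [mul_assoc]
          _ = f c * (f ((⇑τ)^[j] u) * Xi ^ j) * X ^ j := by rw [comm3]
          _ = f c * f ((⇑τ)^[j] u) * (Xi ^ j * X ^ j) := by simp only [mul_assoc]
          _ = f (c * (⇑τ)^[j] u) := by rw [hXiXpow, mul_one, map_mul]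
      | zero => exact ⟨0, 0, by rw [mul_zero], 0, by rw [zero_mul, map_zero]⟩
      | add y z _ _ hy hz =>
        obtain ⟨m₁, q₁, hyq, hy2⟩ := hy
        obtain ⟨m₂, q₂, hzq, hz2⟩ := hz
        obtain ⟨d₁, hd₁⟩ := hDmono q₁ m₁ (max m₁ m₂) (le_max_left _ _) hy2
        obtain ⟨d₂, hd₂⟩ := hDmono q₂ m₂ (max m₁ m₂) (le_max_right _ _) hz2
        exact ⟨max m₁ m₂, q₁ + q₂, by rw [hyq, hzq, mul_add],
          d₁ + d₂, by rw [add_mul, hd₁, hd₂, map_add]⟩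
      | neg y _ hy =>
        obtain ⟨m, q, hyq, c, hc⟩ := hy
        exact ⟨m, -q, by rw [hyq, mul_neg], -c, by rw [neg_mul, hc, map_neg]⟩
    have hMright : ∀ y ∈ AddSubgroup.closure Mset, ∀ u : R,
        y * f u ∈ AddSubgroup.closure Mset := by
      intro y hy
      induction hy using AddSubgroup.closure_induction with
      | mem y hy =>
        intro u
        obtain ⟨t, ht, s, hs, u', rfl⟩ := hy
        apply AddSubgroup.subset_closure
        exact ⟨t, ht, s, hs, u' * u, by rw [map_mul]; simp only [mul_assoc]⟩
      | zero => exact fun u => (by rw [zero_mul]; exact AddSubgroup.zero_mem _)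
      | add y z _ _ hy hz => exact fun u => (by
          rw [add_mul]; exact AddSubgroup.add_mem _ (hy u) (hz u))
      | neg y _ hy => exact fun u => (by
          rw [neg_mul]; exact AddSubgroup.neg_mem _ (hy u))
    let N1 : Submodule Rᵐᵒᵖ Rᵐᵒᵖ := {
      carrier := {w : Rᵐᵒᵖ | f w.unop ∈ AddSubgroup.closure Mset}
      add_mem' := fun {a b} ha hb => by
        simp only [Set.mem_setOf_eq, MulOpposite.unop_add, map_add] at *
        exact AddSubgroup.add_mem _ ha hb
      zero_mem' := by
        simp only [Set.mem_setOf_eq, MulOpposite.unop_zero, map_zero]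
        exact AddSubgroup.zero_mem _
      smul_mem' := fun u w hw => by
        simp only [Set.mem_setOf_eq, smul_eq_mul, MulOpposite.unop_mul, map_mul] at *
        exact hMright _ hw _ }
    obtain ⟨Sfin, hSfin⟩ := IsNoetherian.noetherian N1
    have hgen : ∀ w ∈ Sfin, ∃ (m : ℕ) (q : Q),
        f (MulOpposite.unop w) = f a₀ * q ∧ ∃ c, q * X ^ m = f c := by
      intro w hw
      have hwN : w ∈ N1 := by rw [← hSfin]; exact Submodule.subset_span hw
      exact hE _ hwN
    choose! mfun qfun hq1 cfun hq2 using hgen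
    set J := Finset.sup Sfin mfun with hJdef
    refine ⟨J, ?_⟩
    intro t ht s hs
    obtain ⟨v₀, hv₀⟩ := hs t ht a₀ hA_a
    have hv₀M : (MulOpposite.op v₀) ∈ N1 := by
      show f (MulOpposite.op v₀).unop ∈ AddSubgroup.closure Mset
      rw [MulOpposite.unop_op]
      apply AddSubgroup.subset_closure
      refine ⟨t, ht, s, hs, 1, ?_⟩
      rw [map_one, mul_one, ← mul_assoc]
      exact hv₀.symm
    have hv₀span : (MulOpposite.op v₀) ∈ Submodule.span Rᵐᵒᵖ (↑Sfin : Set Rᵐᵒᵖ) := by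
      rw [hSfin]; exact hv₀M
    rw [Submodule.mem_span_set'] at hv₀span
    obtain ⟨n, κ, g, hsum⟩ := hv₀span
    have hfv₀ : f v₀ = ∑ i, f ((g i : Rᵐᵒᵖ).unop * (κ i).unop) := by
      set F : Rᵐᵒᵖ →+ Q :=
        f.toAddMonoidHom.comp (MulOpposite.opAddEquiv (α := R)).symm.toAddMonoidHom
        with hFdef
      have hF : ∀ y : Rᵐᵒᵖ, F y = f y.unop := fun y => rfl
      have h1 := congrArg F hsum
      rw [map_sum] at h1
      simp only [hF, smul_eq_mul, MulOpposite.unop_mul, MulOpposite.unop_op] at h1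
      exact h1.symm
    have hmemS : ∀ i : Fin n, ((g i : Rᵐᵒᵖ)) ∈ Sfin := fun i => (g i).2
    have hle : ∀ i : Fin n, mfun (g i) ≤ J := fun i => Finset.le_sup (hmemS i)
    have hqJ : ∀ i : Fin n, qfun (g i) * X ^ J
        = f (cfun (g i) * x ^ (J - mfun (g i))) := by
      intro i
      have h2 : (mfun (g i)) + (J - mfun (g i)) = J := by
        have := hle i; omega
      have h3 : qfun (g i) * X ^ J
          = qfun (g i) * X ^ (mfun (g i)) * X ^ (J - mfun (g i)) := by
        rw [mul_assoc, ← pow_add, h2]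
      rw [h3, hq2 _ (hmemS i), map_mul, map_pow, ← hXdef]
    have hterm : ∀ i : Fin n,
        f ((g i : Rᵐᵒᵖ).unop * (κ i).unop) * X ^ J
        = f a₀ * f (cfun (g i) * x ^ (J - mfun (g i)) * (⇑τ)^[J] ((κ i).unop)) := by
      intro i
      calc f ((g i : Rᵐᵒᵖ).unop * (κ i).unop) * X ^ J
          = f ((g i : Rᵐᵒᵖ).unop) * (f ((κ i).unop) * X ^ J) := by
            rw [map_mul, mul_assoc]
        _ = f ((g i : Rᵐᵒᵖ).unop) * (X ^ J * f ((⇑τ)^[J] ((κ i).unop))) := by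
            rw [comm4]
        _ = f a₀ * qfun (g i) * (X ^ J * f ((⇑τ)^[J] ((κ i).unop))) := by
            rw [hq1 _ (hmemS i)]
        _ = f a₀ * ((qfun (g i) * X ^ J) * f ((⇑τ)^[J] ((κ i).unop))) := by
            simp only [mul_assoc]
        _ = f a₀ * (f (cfun (g i) * x ^ (J - mfun (g i)))
              * f ((⇑τ)^[J] ((κ i).unop))) := by rw [hqJ]
        _ = f a₀ * f (cfun (g i) * x ^ (J - mfun (g i)) * (⇑τ)^[J] ((κ i).unop)) := by
            rw [← map_mul]
    have hkey : f a₀ * (t * f s * X ^ J)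
        = f a₀ * f (∑ i, cfun (g i) * x ^ (J - mfun (g i)) * (⇑τ)^[J] ((κ i).unop)) := by
      calc f a₀ * (t * f s * X ^ J) = (f a₀ * t * f s) * X ^ J := by
            simp only [mul_assoc]
        _ = f v₀ * X ^ J := by rw [hv₀]
        _ = (∑ i, f ((g i : Rᵐᵒᵖ).unop * (κ i).unop)) * X ^ J := by
            rw [hfv₀]
        _ = ∑ i, f ((g i : Rᵐᵒᵖ).unop * (κ i).unop) * X ^ J := by
            rw [Finset.sum_mul]
        _ = ∑ i, f a₀ * f (cfun (g i) * x ^ (J - mfun (g i)) * (⇑τ)^[J] ((κ i).unop)) := by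
            exact Finset.sum_congr rfl (fun i _ => hterm i)
        _ = f a₀ * ∑ i, f (cfun (g i) * x ^ (J - mfun (g i)) * (⇑τ)^[J] ((κ i).unop)) := by
            rw [Finset.mul_sum]
        _ = f a₀ * f (∑ i, cfun (g i) * x ^ (J - mfun (g i)) * (⇑τ)^[J] ((κ i).unop)) := by
            rw [map_sum]
    exact ⟨_, mul_left_cancel₀ hα0 hkey⟩
  -- Step 2.5 : T·f(B) ⊆ f(R)
  have step25 : ∀ t ∈ T, ∀ s ∈ B, ∃ c, t * f s = f c := by
    obtain ⟨J, hJ⟩ := step2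
    have key : ∀ k : ℕ, (∀ t ∈ T, ∀ s ∈ B, ∃ c, t * f s * X ^ k = f c) →
        ∀ t ∈ T, ∀ s ∈ B, ∃ c, t * f s = f c := by
      intro k
      induction k with
      | zero =>
        intro h t ht s hs
        obtain ⟨c, hc⟩ := h t ht s hs
        exact ⟨c, by rw [← hc, pow_zero, mul_one]⟩
      | succ n ih =>
        intro h
        apply ih
        intro t ht s hs
        obtain ⟨h₁, hh₁⟩ := h t ht s hs
        set w := t * f s * X ^ n with hwdef
        have hw : w = f h₁ * Xi := by
          have h2 : w * X = f h₁ := by rw [hwdef, mul_assoc, ← pow_succ, hh₁]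
          rw [← h2, cancelXXi]
        have ht'' : t * f (s * x ^ n) * t ∈ T :=
          T.mul_mem (T.mul_mem ht (hfRleT _)) ht
        obtain ⟨h₂, hh₂⟩ := h _ ht'' s hs
        have hrel : w * w * X = f h₂ := by
          rw [← hh₂, hwdef, map_mul, map_pow, ← hXdef, pow_succ]
          simp only [mul_assoc]
        obtain ⟨h₃, hh₃⟩ := junctionR w h₁ h₂ hw hrel
        exact ⟨h₃, hh₃⟩
    exact key J hJ
  -- the final conductor
  set B₂ : Set R := {s : R | ∀ t ∈ T, ∃ c, t * f s = f c} with hB₂def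
  have hB₂b₀ : b₀ ∈ B₂ := fun t ht => step25 t ht b₀ hB_b
  have hB₂sat : ∀ s : R, s * x ∈ B₂ → s ∈ B₂ := by
    intro s hsx t ht
    obtain ⟨h₁, hh₁⟩ := hsx t ht
    have hw : t * f s = f h₁ * Xi := by
      have h2 : (t * f s) * X = f h₁ := by
        rw [mul_assoc, hXdef, ← map_mul]
        exact hh₁
      rw [← h2, cancelXXi]
    obtain ⟨h₂, hh₂⟩ := hsx (t * f s * t) (T.mul_mem (T.mul_mem ht (hfRleT s)) ht)
    have hrel : (t * f s) * (t * f s) * X = f h₂ := by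
      rw [← hh₂, map_mul, ← hXdef]
      simp only [mul_assoc]
    obtain ⟨h₃, hh₃⟩ := junctionR (t * f s) h₁ h₂ hw hrel
    exact ⟨h₃, hh₃⟩
  -- uniform denominator for T itself
  have stepM : ∃ M : ℕ, ∀ t ∈ T, ∃ c, t * X ^ M = f c := by
    set M2 : Set Q := {q : Q | ∃ u : R, ∃ t ∈ T, q = f u * t * f b₀} with hM2def
    have hE2 : ∀ y ∈ AddSubgroup.closure M2, ∃ (m : ℕ) (q : Q),
        y = q * f b₀ ∧ ∃ c, q * X ^ m = f c := by
      intro y hy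
      induction hy using AddSubgroup.closure_induction with
      | mem y hy =>
        obtain ⟨u, t, ht, rfl⟩ := hy
        obtain ⟨c₀, j, hc₀⟩ := hRx t (hTRx t ht)
        refine ⟨j, f u * t, by rw [mul_assoc], u * c₀, ?_⟩
        calc f u * t * X ^ j = f u * (f c₀ * (Xi ^ j * X ^ j)) := by
              rw [hc₀]; simp only [mul_assoc]
          _ = f (u * c₀) := by rw [hXiXpow, mul_one, map_mul]
      | zero => exact ⟨0, 0, by rw [zero_mul], 0, by rw [zero_mul, map_zero]⟩
      | add y z _ _ hy hz =>
        obtain ⟨m₁, q₁, hyq, hy2⟩ := hy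
        obtain ⟨m₂, q₂, hzq, hz2⟩ := hz
        obtain ⟨d₁, hd₁⟩ := hDmono q₁ m₁ (max m₁ m₂) (le_max_left _ _) hy2
        obtain ⟨d₂, hd₂⟩ := hDmono q₂ m₂ (max m₁ m₂) (le_max_right _ _) hz2
        exact ⟨max m₁ m₂, q₁ + q₂, by rw [hyq, hzq, add_mul],
          d₁ + d₂, by rw [add_mul, hd₁, hd₂, map_add]⟩
      | neg y _ hy =>
        obtain ⟨m, q, hyq, c, hc⟩ := hy
        exact ⟨m, -q, by rw [hyq, neg_mul], -c, by rw [neg_mul, hc, map_neg]⟩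
    have hM2left : ∀ y ∈ AddSubgroup.closure M2, ∀ u : R,
        f u * y ∈ AddSubgroup.closure M2 := by
      intro y hy
      induction hy using AddSubgroup.closure_induction with
      | mem y hy =>
        intro u
        obtain ⟨u', t, ht, rfl⟩ := hy
        apply AddSubgroup.subset_closure
        exact ⟨u * u', t, ht, by rw [map_mul]; simp only [mul_assoc]⟩
      | zero => exact fun u => (by rw [mul_zero]; exact AddSubgroup.zero_mem _)
      | add y z _ _ hy hz => exact fun u => (by
          rw [mul_add]; exact AddSubgroup.add_mem _ (hy u) (hz u))
      | neg y _ hy => exact fun u => (by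
          rw [mul_neg]; exact AddSubgroup.neg_mem _ (hy u))
    let N2 : Ideal R := {
      carrier := {v : R | f v ∈ AddSubgroup.closure M2}
      add_mem' := fun {a b} ha hb => by
        simp only [Set.mem_setOf_eq, map_add] at *
        exact AddSubgroup.add_mem _ ha hb
      zero_mem' := by
        simp only [Set.mem_setOf_eq, map_zero]
        exact AddSubgroup.zero_mem _
      smul_mem' := fun u v hv => by
        simp only [Set.mem_setOf_eq, smul_eq_mul, map_mul] at *
        exact hM2left _ hv u }
    obtain ⟨Sfin2, hSfin2⟩ := IsNoetherian.noetherian N2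
    have hgen2 : ∀ w ∈ Sfin2, ∃ (m : ℕ) (q : Q),
        f w = q * f b₀ ∧ ∃ c, q * X ^ m = f c := by
      intro w hw
      have hwN : w ∈ N2 := by rw [← hSfin2]; exact Submodule.subset_span hw
      exact hE2 _ hwN
    choose! mfun2 qfun2 hq1' cfun2 hq2' using hgen2
    set M := Finset.sup Sfin2 mfun2 with hMdef2
    refine ⟨M, ?_⟩
    intro t ht
    obtain ⟨v₀, hv₀⟩ := step25 t ht b₀ hB_b
    have hv₀N : v₀ ∈ N2 := by
      show f v₀ ∈ AddSubgroup.closure M2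
      apply AddSubgroup.subset_closure
      refine ⟨1, t, ht, ?_⟩
      rw [map_one, one_mul]
      exact hv₀.symm
    have hv₀span : v₀ ∈ Submodule.span R (↑Sfin2 : Set R) := by
      rw [hSfin2]; exact hv₀N
    rw [Submodule.mem_span_set'] at hv₀span
    obtain ⟨n, κ, g, hsum⟩ := hv₀span
    have hfv₀ : f v₀ = ∑ i, f (κ i * (g i : R)) := by
      rw [← hsum, map_sum]
      exact Finset.sum_congr rfl (fun i _ => by rw [smul_eq_mul])
    have hmemS : ∀ i : Fin n, ((g i : R)) ∈ Sfin2 := fun i => (g i).2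
    have hle : ∀ i : Fin n, mfun2 (g i) ≤ M := fun i => Finset.le_sup (hmemS i)
    have hqM : ∀ i : Fin n, qfun2 (g i) * X ^ M
        = f (cfun2 (g i) * x ^ (M - mfun2 (g i))) := by
      intro i
      have h2 : (mfun2 (g i)) + (M - mfun2 (g i)) = M := by
        have := hle i; omega
      have h3 : qfun2 (g i) * X ^ M
          = qfun2 (g i) * X ^ (mfun2 (g i)) * X ^ (M - mfun2 (g i)) := by
        rw [mul_assoc, ← pow_add, h2]
      rw [h3, hq2' _ (hmemS i), map_mul, map_pow, ← hXdef]
    -- t = ∑ f κᵢ * qᵢ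
    have hteq : t * f b₀ = (∑ i, f (κ i) * qfun2 (g i)) * f b₀ := by
      rw [hv₀, hfv₀, Finset.sum_mul]
      refine Finset.sum_congr rfl (fun i _ => ?_)
      rw [map_mul, hq1' _ (hmemS i), mul_assoc]
    have ht2 : t = ∑ i, f (κ i) * qfun2 (g i) := mul_right_cancel₀ hβ0 hteq
    refine ⟨∑ i, κ i * (cfun2 (g i) * x ^ (M - mfun2 (g i))), ?_⟩
    rw [ht2, Finset.sum_mul, map_sum]
    refine Finset.sum_congr rfl (fun i _ => ?_)
    rw [mul_assoc, hqM i, ← map_mul]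
  -- conclude
  obtain ⟨M, hM⟩ := stepM
  have hxMB₂ : (x ^ M : R) ∈ B₂ := by
    intro t ht
    obtain ⟨c, hc⟩ := hM t ht
    exact ⟨c, by rw [map_pow, ← hXdef]; exact hc⟩
  have hdesc : ∀ k : ℕ, (x ^ k : R) ∈ B₂ → (1:R) ∈ B₂ := by
    intro k
    induction k with
    | zero => intro h; simpa using h
    | succ n ih =>
      intro h
      exact ih (hB₂sat _ (by rwa [← pow_succ]))
  have h1B₂ : (1:R) ∈ B₂ := hdesc M hxMB₂
  apply le_antisymm ?_ hT
  intro t ht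
  obtain ⟨c, hc⟩ := h1B₂ t ht
  rw [map_one, mul_one] at hc
  exact ⟨c, hc.symm⟩
end
end

section
/- Let A be a domain, σ an automorphism and δ a σ-derivation of A, and R = A[x; σ, δ]. Let c = dx + e with d,e ∈ A, d ≠ 0, be a normal element of R, with β the automorphism of R satisfying cr = β(r)c for all r ∈ R. Then β(A) = A, d is a normal element of A, and β(a)d = dσ(a) for all a ∈ A. Moreover, if e is regular modulo the ideal dA = Ad, then R/Rc is a domain. -/
/-!
Write `c = d x + e`. Comparing leading terms in `c r = β(r) c` shows that `β` preserves degree,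
so `β(A) = A`, and the coefficients of `x` in `c a = β(a) c` give `β(a) d = d σ(a)`; hence
`dA = Ad`. The same comparison in `c β⁻¹(x) = x c` gives `σ(d) ∈ dA`, so that `β(d) ∈ dA`.

Since `Rc = cR`, the second half is about divisibility by `c`. Multiplying by a power of `d`
reduces every element modulo `cR` to an element of `A`, and `A ∩ cR = 0` by degree. If
`d r = c w`, comparing coefficients modulo `d` from the top and using that `e` is regular
modulo `dA` gives `w ∈ dR`; as `β(d) ∈ dA`, `d` can then be cancelled, so `d` is regular
modulo `cR`, and then so is every nonzero element of `A`. Now if `c ∣ r s` and `d^k r ≡ b`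
with `b ∈ A`, either `b = 0` and `c ∣ r`, or `c ∣ b s` and `c ∣ s`.
-/

section Normal

variable {R : Type*} [Ring R] {c : R} {β : R ≃+* R} (hβ : ∀ r, c * r = β r * c)
include hβ

lemma exists_eq_mul_iff_dvd_of_normal {r : R} : (∃ v, r = v * c) ↔ c ∣ r := by
  constructor
  · rintro ⟨v, rfl⟩
    exact ⟨β.symm v, by rw [hβ, RingEquiv.apply_symm_apply]⟩
  · rintro ⟨w, rfl⟩
    exact ⟨β w, hβ w⟩

lemma dvd_mul_of_dvd_right_of_normal {r : R} (h : c ∣ r) (s : R) : c ∣ s * r := by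
  obtain ⟨v, rfl⟩ := (exists_eq_mul_iff_dvd_of_normal hβ).2 h
  exact (exists_eq_mul_iff_dvd_of_normal hβ).1 ⟨s * v, (mul_assoc _ _ _).symm⟩

end Normal

namespace OreExtension

variable {R : Type*} [Ring R] (A : Subring R) (x : R)

/-- Throughout, `(a : R) * x ^ n - r ∈ degLT A x n` says that `a x ^ n` is the leading term
of `r`, with `a` possibly zero. -/
def degLT (n : ℕ) : Submodule A R :=
  Submodule.span A (Set.range fun i : Fin n => x ^ (i : ℕ))

variable {A x}

lemma degLT_zero : degLT A x 0 = ⊥ := by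
  simp [degLT]

lemma degLT_mono {m n : ℕ} (h : m ≤ n) : degLT A x m ≤ degLT A x n :=
  Submodule.span_mono <| Set.range_subset_iff.2 fun i => ⟨Fin.castLE h i, rfl⟩

lemma pow_mem_degLT {i n : ℕ} (h : i < n) : x ^ i ∈ degLT A x n :=
  Submodule.subset_span ⟨⟨i, h⟩, rfl⟩

lemma coe_mul_pow_mem_degLT (a : A) {i n : ℕ} (h : i < n) : (a : R) * x ^ i ∈ degLT A x n :=
  Submodule.smul_mem _ a (pow_mem_degLT h)

lemma coe_mul_mem_degLT (a : A) {r : R} {n : ℕ} (h : r ∈ degLT A x n) :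
    (a : R) * r ∈ degLT A x n :=
  Submodule.smul_mem _ a h

lemma coe_mul_pow_zero_sub_mem_degLT (a : A) : (a : R) * x ^ 0 - a ∈ degLT A x 0 := by
  simp

lemma mem_degLT_succ_of_sub_mem {r : R} {a : A} {n : ℕ}
    (h : (a : R) * x ^ n - r ∈ degLT A x n) : r ∈ degLT A x (n + 1) := by
  simpa using sub_mem (coe_mul_pow_mem_degLT a n.lt_succ_self) (degLT_mono n.le_succ h)

lemma exists_sub_mem_degLT_of_mem_succ {r : R} {n : ℕ} (h : r ∈ degLT A x (n + 1)) :
    ∃ a : A, (a : R) * x ^ n - r ∈ degLT A x n := by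
  induction h using Submodule.span_induction with
  | mem _ hr =>
    obtain ⟨i, rfl⟩ := hr
    rcases (Nat.lt_succ_iff.1 i.isLt).lt_or_eq with hi | hi
    · exact ⟨0, by simpa using pow_mem_degLT hi⟩
    · exact ⟨1, by simp [hi]⟩
  | zero => exact ⟨0, by simp⟩
  | add r s _ _ hr hs =>
    obtain ⟨a, ha⟩ := hr
    obtain ⟨b, hb⟩ := hs
    exact ⟨a + b, by simpa [add_mul, add_sub_add_comm] using add_mem ha hb⟩
  | smul b r _ hr =>
    obtain ⟨a, ha⟩ := hr
    exact ⟨b * a, by simpa [Subring.smul_def, mul_sub, mul_assoc] using coe_mul_mem_degLT b ha⟩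

lemma exists_eq_coe_of_mem_degLT_one {r : R} (h : r ∈ degLT A x 1) : ∃ a : A, r = a := by
  obtain ⟨a, ha⟩ := exists_sub_mem_degLT_of_mem_succ (n := 0) h
  exact ⟨a, by simpa [degLT_zero, sub_eq_zero, eq_comm] using ha⟩

lemma mul_pow_mem_degLT {r : R} {n : ℕ} (h : r ∈ degLT A x n) (k : ℕ) :
    r * x ^ k ∈ degLT A x (n + k) := by
  induction h using Submodule.span_induction with
  | mem _ hr =>
    obtain ⟨i, rfl⟩ := hr
    simpa [← pow_add] using pow_mem_degLT (A := A) (x := x) (by omega : (i : ℕ) + k < n + k)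
  | zero => simp
  | add r s _ _ hr hs => simpa [add_mul] using add_mem hr hs
  | smul b r _ hr => simpa [Subring.smul_def, mul_assoc] using coe_mul_mem_degLT b hr

variable {σ : A ≃+* A} {δ : A →+ A} (hx : ∀ a : A, x * a = (σ a : R) * x + (δ a : R))
  (hspan : ∀ r : R, ∃ (N : ℕ) (c : Fin N → A), r = ∑ i, (c i : R) * x ^ (i : ℕ))
  (hindep : ∀ (N : ℕ) (c : Fin N → A),
    (∑ i : Fin N, (c i : R) * x ^ (i : ℕ)) = 0 → ∀ i, c i = 0)

section Multiplication

include hx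

lemma x_mul_mem_degLT {r : R} {n : ℕ} (h : r ∈ degLT A x n) : x * r ∈ degLT A x (n + 1) := by
  induction h using Submodule.span_induction with
  | mem _ hr =>
    obtain ⟨i, rfl⟩ := hr
    simpa [← pow_succ'] using pow_mem_degLT (A := A) (x := x) (by omega : (i : ℕ) + 1 < n + 1)
  | zero => simp
  | add r s _ _ hr hs => simpa [mul_add] using add_mem hr hs
  | smul a r hr hxr =>
    have hr' := degLT_mono (Nat.le_succ n) hr
    have key : x * (a • r) = (σ a : R) * (x * r) + (δ a : R) * r := by
      rw [Subring.smul_def, smul_eq_mul, ← mul_assoc, hx, add_mul, mul_assoc]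
    rw [key]
    exact add_mem (coe_mul_mem_degLT (σ a) hxr) (coe_mul_mem_degLT (δ a) hr')

lemma pow_mul_mem_degLT {r : R} {n : ℕ} (h : r ∈ degLT A x n) (k : ℕ) :
    x ^ k * r ∈ degLT A x (n + k) := by
  induction k with
  | zero => simpa using h
  | succ k ih => simpa [pow_succ', mul_assoc, ← add_assoc] using x_mul_mem_degLT hx ih

lemma mul_mem_degLT {r s : R} {m n : ℕ} (hr : r ∈ degLT A x m) (hs : s ∈ degLT A x (n + 1)) :
    r * s ∈ degLT A x (m + n) := by
  induction hr using Submodule.span_induction with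
  | mem _ hr =>
    obtain ⟨i, rfl⟩ := hr
    exact degLT_mono (by omega) (pow_mul_mem_degLT hx hs i)
  | zero => simp
  | add r t _ _ hr ht => simpa [add_mul] using add_mem hr ht
  | smul a r _ hr => simpa [Subring.smul_def, mul_assoc] using coe_mul_mem_degLT a hr

lemma pow_mul_coe_sub_mem_degLT (k : ℕ) (a : A) :
    x ^ k * a - ((⇑σ)^[k] a : R) * x ^ k ∈ degLT A x k := by
  induction k with
  | zero => simp
  | succ k ih =>
    have key : x ^ (k + 1) * a - ((⇑σ)^[k + 1] a : R) * x ^ (k + 1)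
        = x * (x ^ k * a - ((⇑σ)^[k] a : R) * x ^ k) + (δ ((⇑σ)^[k] a) : R) * x ^ k := by
      rw [Function.iterate_succ_apply', pow_succ', mul_sub, ← mul_assoc x ((⇑σ)^[k] a : R), hx]
      noncomm_ring
    rw [key]
    exact add_mem (x_mul_mem_degLT hx ih) (coe_mul_pow_mem_degLT _ k.lt_succ_self)

lemma leading_mul {r s : R} {a b : A} {m n : ℕ}
    (hr : (a : R) * x ^ m - r ∈ degLT A x m) (hs : (b : R) * x ^ n - s ∈ degLT A x n) :
    ((a * (⇑σ)^[m] b : A) : R) * x ^ (m + n) - r * s ∈ degLT A x (m + n) := by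
  set t := (a : R) * x ^ m - r
  set w := (b : R) * x ^ n - s
  have key : ((a * (⇑σ)^[m] b : A) : R) * x ^ (m + n) - r * s
      = -((a : R) * ((x ^ m * b - ((⇑σ)^[m] b : R) * x ^ m) * x ^ n))
        + (a : R) * (x ^ m * w) + t * s := by
    simp only [t, w, Subring.coe_mul, pow_add]
    noncomm_ring
  rw [key]
  refine add_mem (add_mem (neg_mem (coe_mul_mem_degLT a ?_)) (coe_mul_mem_degLT a ?_))
    (mul_mem_degLT hx hr (mem_degLT_succ_of_sub_mem hs))
  · exact mul_pow_mem_degLT (pow_mul_coe_sub_mem_degLT hx m b) n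
  · simpa [add_comm] using pow_mul_mem_degLT hx hs m

end Multiplication

include hspan in
lemma exists_mem_degLT (r : R) : ∃ N, r ∈ degLT A x N := by
  obtain ⟨N, c, rfl⟩ := hspan r
  exact ⟨N, sum_mem fun i _ => coe_mul_pow_mem_degLT (c i) i.isLt⟩

include hspan in
lemma exists_leading {r : R} (hr : r ≠ 0) :
    ∃ (n : ℕ) (a : A), a ≠ 0 ∧ (a : R) * x ^ n - r ∈ degLT A x n := by
  obtain ⟨N, hmem⟩ := exists_mem_degLT hspan r
  induction N generalizing r with
  | zero => exact absurd (by simpa [degLT_zero] using hmem) hr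
  | succ N ih =>
    obtain ⟨a, ha⟩ := exists_sub_mem_degLT_of_mem_succ hmem
    by_cases a0 : a = 0
    · exact ih hr (by simpa [a0] using ha)
    · exact ⟨N, a, a0, ha⟩

include hindep in
lemma eq_zero_of_coe_mul_pow_mem_degLT {a : A} {n : ℕ} (h : (a : R) * x ^ n ∈ degLT A x n) :
    a = 0 := by
  obtain ⟨c, hc⟩ := (Submodule.mem_span_range_iff_exists_fun A).1 h
  have := hindep (n + 1) (Fin.lastCases a fun i => -c i) (by
    simp only [Fin.sum_univ_castSucc, Fin.lastCases_last, Fin.lastCases_castSucc,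
      Fin.val_castSucc, Fin.val_last, Subring.coe_neg, neg_mul, Finset.sum_neg_distrib]
    simp only [Subring.smul_def, smul_eq_mul] at hc
    rw [hc, neg_add_cancel]) (Fin.last n)
  simpa using this

include hindep in
lemma eq_of_sub_mem_degLT {r : R} {a b : A} {n : ℕ} (ha : (a : R) * x ^ n - r ∈ degLT A x n)
    (hb : (b : R) * x ^ n - r ∈ degLT A x n) : a = b := by
  rw [← sub_eq_zero]
  refine eq_zero_of_coe_mul_pow_mem_degLT hindep (n := n) ?_
  simpa [sub_mul] using sub_mem ha hb

section NormalElement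

variable [IsDomain R]

include hx hspan hindep in

lemma mem_degLT_of_mul_mem_left {r s : R} {b : A} {k n : ℕ} (hb : b ≠ 0)
    (hs : (b : R) * x ^ k - s ∈ degLT A x k) (h : r * s ∈ degLT A x (n + k)) :
    r ∈ degLT A x n := by
  by_contra hrn
  obtain ⟨m, a, ha, hra⟩ := exists_leading hspan (r := r) fun hr => hrn (hr ▸ zero_mem _)
  have hnm : n ≤ m := by
    by_contra! hmn
    exact hrn (degLT_mono hmn (mem_degLT_succ_of_sub_mem hra))
  have hlead : ((a * (⇑σ)^[m] b : A) : R) * x ^ (m + k) ∈ degLT A x (m + k) := by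
    simpa using add_mem (leading_mul hx hra hs) (degLT_mono (by omega) h)
  have hσb : (⇑σ)^[m] b ≠ 0 :=
    ((σ.injective.iterate m).ne_iff' (Function.iterate_fixed (map_zero σ) m)).2 hb
  exact mul_ne_zero ha hσb (eq_zero_of_coe_mul_pow_mem_degLT hindep hlead)

include hx hspan hindep in
lemma mem_degLT_of_mul_mem_right {r s : R} {b : A} {k n : ℕ} (hb : b ≠ 0)
    (hs : (b : R) * x ^ k - s ∈ degLT A x k) (h : s * r ∈ degLT A x (k + n)) :
    r ∈ degLT A x n := by
  by_contra hrn
  obtain ⟨m, a, ha, hra⟩ := exists_leading hspan (r := r) fun hr => hrn (hr ▸ zero_mem _)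
  have hnm : n ≤ m := by
    by_contra! hmn
    exact hrn (degLT_mono hmn (mem_degLT_succ_of_sub_mem hra))
  have hlead : ((b * (⇑σ)^[k] a : A) : R) * x ^ (k + m) ∈ degLT A x (k + m) := by
    simpa using add_mem (leading_mul hx hs hra) (degLT_mono (by omega) h)
  have hσa : (⇑σ)^[k] a ≠ 0 :=
    ((σ.injective.iterate k).ne_iff' (Function.iterate_fixed (map_zero σ) k)).2 ha
  exact mul_ne_zero hb hσa (eq_zero_of_coe_mul_pow_mem_degLT hindep hlead)

variable {c : R} {d : A} (hd : d ≠ 0) (hc : (d : R) * x ^ 1 - c ∈ degLT A x 1)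
  {β : R ≃+* R} (hβ : ∀ r, c * r = β r * c)

omit [IsDomain R] in
include hx hindep hc in
lemma coe_mul_eq_mul_σ_of_mul_coe_eq {a g : A} (h : c * a = g * c) : (g : R) * d = d * σ a := by
  have hca := leading_mul hx hc (coe_mul_pow_zero_sub_mem_degLT a)
  have hgc := leading_mul hx (coe_mul_pow_zero_sub_mem_degLT g) hc
  rw [h] at hca
  simpa using congrArg ((↑) : A → R) (eq_of_sub_mem_degLT hindep hgc hca)

include hx hspan hindep hd hc hβ

lemma apply_coe_mem (a : A) : β a ∈ A := by
  have hca := mem_degLT_succ_of_sub_mem (leading_mul hx hc (coe_mul_pow_zero_sub_mem_degLT a))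
  rw [hβ] at hca
  obtain ⟨g, hg⟩ :=
    exists_eq_coe_of_mem_degLT_one (mem_degLT_of_mul_mem_left hx hspan hindep hd hc hca)
  exact hg ▸ g.2

lemma exists_apply_coe_eq (a : A) : ∃ g : A, β g = a := by
  have hac : (a : R) * c ∈ degLT A x (1 + 1) :=
    coe_mul_mem_degLT a (mem_degLT_succ_of_sub_mem hc)
  rw [← RingEquiv.apply_symm_apply β a, ← hβ] at hac
  obtain ⟨g, hg⟩ :=
    exists_eq_coe_of_mem_degLT_one (mem_degLT_of_mul_mem_right hx hspan hindep hd hc hac)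
  exact ⟨g, by rw [← hg, RingEquiv.apply_symm_apply]⟩

lemma apply_coe_mul_eq (a : A) : β a * d = d * σ a := by
  obtain ⟨g, hg⟩ : ∃ g : A, β a = g := ⟨⟨_, apply_coe_mem hx hspan hindep hd hc hβ a⟩, rfl⟩
  rw [hg]
  exact coe_mul_eq_mul_σ_of_mul_coe_eq hx hindep hc (hg ▸ hβ a)

lemma exists_σ_eq_mul : ∃ p : A, (σ d : R) = d * p := by
  have hxc := leading_mul hx (a := 1) (m := 1) (r := x) (by simp) hc
  have hcr : c * β.symm x = x * c := by rw [hβ, RingEquiv.apply_symm_apply]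
  have hr : β.symm x ∈ degLT A x (1 + 1) :=
    mem_degLT_of_mul_mem_right (k := 1) hx hspan hindep hd hc
      (by rw [hcr]; exact mem_degLT_succ_of_sub_mem hxc)
  obtain ⟨g, hg⟩ := exists_sub_mem_degLT_of_mem_succ hr
  have hcg := leading_mul hx hc hg
  rw [hcr] at hcg
  refine ⟨σ g, ?_⟩
  simpa using congrArg ((↑) : A → R) (eq_of_sub_mem_degLT hindep hxc hcg)

omit hβ in
lemma eq_zero_of_dvd_coe {a : A} (h : c ∣ (a : R)) : a = 0 := by
  obtain ⟨w, hw⟩ := h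
  have hcw : c * w ∈ degLT A x (1 + 0) := by
    rw [← hw]
    simpa using coe_mul_pow_mem_degLT (x := x) a zero_lt_one
  have hw0 := mem_degLT_of_mul_mem_right hx hspan hindep hd hc hcw
  rw [degLT_zero, Submodule.mem_bot] at hw0
  simpa [hw0] using hw

omit hβ in
lemma not_dvd_one : ¬ c ∣ 1 :=
  fun h => one_ne_zero (eq_zero_of_dvd_coe hx hspan hindep hd hc (a := 1) (by simpa using h))

omit [IsDomain R] hindep hd in
lemma exists_dvd_pow_mul_sub_coe (r : R) : ∃ (k : ℕ) (b : A), c ∣ (d : R) ^ k * r - b := by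
  obtain ⟨N, hr⟩ := exists_mem_degLT hspan r
  replace hr := degLT_mono N.le_succ hr
  induction N generalizing r with
  | zero =>
    obtain ⟨b, rfl⟩ := exists_eq_coe_of_mem_degLT_one hr
    exact ⟨0, b, by simp⟩
  | succ N ih =>
    obtain ⟨f, hf⟩ := exists_sub_mem_degLT_of_mem_succ hr
    -- `d * f` is the leading coefficient of `c * (g * x ^ N)`, so `d * r` drops in degree mod `c`
    set g := σ.symm f
    have hg : (g : R) * x ^ N - g * x ^ N ∈ degLT A x N := by simp
    have hcg := leading_mul hx hc hg
    have hlower : (d : R) * r - c * (g * x ^ N) ∈ degLT A x (N + 1) := by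
      have key : (d : R) * r - c * (g * x ^ N)
          = (((d * (⇑σ)^[1] g : A) : R) * x ^ (1 + N) - c * (g * x ^ N))
            - (d : R) * ((f : R) * x ^ (N + 1) - r) := by
        simp only [g, Function.iterate_one, RingEquiv.apply_symm_apply, Subring.coe_mul,
          add_comm 1 N]
        noncomm_ring
      rw [key]
      exact sub_mem (by simpa [add_comm] using hcg) (coe_mul_mem_degLT d hf)
    obtain ⟨k, b, hk⟩ := ih _ hlower
    refine ⟨k + 1, b, ?_⟩
    have hcd : c ∣ (d : R) ^ k * (c * (g * x ^ N)) :=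
      dvd_mul_of_dvd_right_of_normal hβ (dvd_mul_right c _) _
    convert dvd_add hk hcd using 1
    noncomm_ring

lemma exists_mul_coe_eq (a : A) : ∃ b : A, (a : R) * d = d * b := by
  obtain ⟨g, hg⟩ := exists_apply_coe_eq hx hspan hindep hd hc hβ a
  exact ⟨σ g, hg ▸ apply_coe_mul_eq hx hspan hindep hd hc hβ g⟩

lemma exists_coe_mul_eq (a : A) : ∃ b : A, (d : R) * a = b * d := by
  refine ⟨⟨_, apply_coe_mem hx hspan hindep hd hc hβ (σ.symm a)⟩, ?_⟩
  simpa using (apply_coe_mul_eq hx hspan hindep hd hc hβ (σ.symm a)).symm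

lemma exists_pow_mul_coe_eq (k : ℕ) (a : A) : ∃ b : A, (d : R) ^ k * a = b * d ^ k := by
  induction k generalizing a with
  | zero => exact ⟨a, by simp⟩
  | succ k ih =>
    obtain ⟨b, hb⟩ := exists_coe_mul_eq hx hspan hindep hd hc hβ a
    obtain ⟨b', hb'⟩ := ih b
    exact ⟨b', by rw [pow_succ, mul_assoc, hb, ← mul_assoc, hb', mul_assoc]⟩

lemma exists_apply_eq_mul : ∃ p : A, β d = d * p := by
  obtain ⟨p, hp⟩ := exists_σ_eq_mul hx hspan hindep hd hc hβ
  obtain ⟨p', hp'⟩ := exists_coe_mul_eq hx hspan hindep hd hc hβ p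
  refine ⟨p', mul_right_cancel₀ (ZeroMemClass.coe_eq_zero.not.2 hd) ?_⟩
  rw [apply_coe_mul_eq hx hspan hindep hd hc hβ, hp, hp', mul_assoc]

end NormalElement

section CompletelyPrime

variable [IsDomain R] {d e : A} (hd : d ≠ 0) (hreg : ∀ a : A, d ∣ e * a → d ∣ a)
  {β : R ≃+* R} (hβ : ∀ r, ((d : R) * x + e) * r = β r * ((d : R) * x + e))

omit [IsDomain R] in
lemma coe_mul_pow_one_sub_mem_degLT : (d : R) * x ^ 1 - (d * x + e) ∈ degLT A x 1 := by
  simpa using neg_mem (coe_mul_pow_mem_degLT (x := x) e zero_lt_one)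

include hx hspan hindep hd hreg in
lemma coe_dvd_of_coe_dvd_mul (hed : ∃ b : A, (e : R) * d = d * b) {w : R}
    (h : (d : R) ∣ (d * x + e) * w) : (d : R) ∣ w := by
  obtain ⟨N, hw⟩ := exists_mem_degLT hspan w
  induction N generalizing w with
  | zero => simp [(Submodule.mem_bot A).1 (degLT_zero (x := x) ▸ hw)]
  | succ N ih =>
    obtain ⟨g, hg⟩ := exists_sub_mem_degLT_of_mem_succ hw
    -- modulo `d`, the top coefficient of `(d * x + e) * w` is `e * g`
    obtain ⟨f, hf⟩ : (d : R) ∣ e * w := by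
      rw [← dvd_add_right (dvd_mul_right (d : R) (x * w))]
      convert h using 1
      noncomm_ring
    have hf_mem : f ∈ degLT A x (N + 1) :=
      mem_degLT_of_mul_mem_right (k := 0) hx hspan hindep hd (coe_mul_pow_zero_sub_mem_degLT d)
        (by rw [zero_add, ← hf]; exact coe_mul_mem_degLT e hw)
    obtain ⟨f', hf'⟩ := exists_sub_mem_degLT_of_mem_succ hf_mem
    have hcoeff : e * g = d * f' := by
      refine eq_of_sub_mem_degLT hindep (r := e * w) (n := N) ?_ ?_
      · simpa [mul_sub, mul_assoc] using coe_mul_mem_degLT e hg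
      · simpa [hf, mul_sub, mul_assoc] using coe_mul_mem_degLT d hf'
    obtain ⟨g', rfl⟩ := hreg g ⟨f', hcoeff⟩
    have hcd : (d : R) ∣ (d * x + e) * d := by
      obtain ⟨b, hb⟩ := hed
      exact ⟨x * d + b, by rw [add_mul, hb]; noncomm_ring⟩
    have hlow : (d : R) ∣ (d * x + e) * ((d * g' : A) * x ^ N - w) := by
      rw [mul_sub]
      refine dvd_sub ?_ h
      simpa [mul_assoc] using hcd.mul_right (g' * x ^ N)
    convert dvd_sub (dvd_mul_right (d : R) (g' * x ^ N)) (ih hlow hg) using 1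
    simp [mul_assoc]

include hx hspan hindep hd hreg hβ

lemma dvd_of_dvd_d_mul {r : R} (h : (d * x + e : R) ∣ d * r) : (d * x + e : R) ∣ r := by
  have hc := coe_mul_pow_one_sub_mem_degLT (x := x) (d := d) (e := e)
  obtain ⟨w, hw⟩ := h
  obtain ⟨w', rfl⟩ := coe_dvd_of_coe_dvd_mul hx hspan hindep hd hreg
    (exists_mul_coe_eq hx hspan hindep hd hc hβ e) ⟨r, hw.symm⟩
  obtain ⟨p, hp⟩ := exists_apply_eq_mul hx hspan hindep hd hc hβ
  have hr : (d : R) * r = d * (p * ((d * x + e) * w')) := by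
    rw [hw, ← mul_assoc, hβ, hp]
    noncomm_ring
  rw [mul_left_cancel₀ (ZeroMemClass.coe_eq_zero.not.2 hd) hr]
  exact dvd_mul_of_dvd_right_of_normal hβ (dvd_mul_right _ _) _

lemma dvd_of_dvd_pow_mul (k : ℕ) {r : R} (h : (d * x + e : R) ∣ d ^ k * r) :
    (d * x + e : R) ∣ r := by
  induction k generalizing r with
  | zero => simpa using h
  | succ k ih =>
    rw [pow_succ, mul_assoc] at h
    exact dvd_of_dvd_d_mul hx hspan hindep hd hreg hβ (ih h)

lemma dvd_of_dvd_coe_mul {a : A} (ha : a ≠ 0) {r : R} (h : (d * x + e : R) ∣ a * r) :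
    (d * x + e : R) ∣ r := by
  have hc := coe_mul_pow_one_sub_mem_degLT (x := x) (d := d) (e := e)
  obtain ⟨k, b, hk⟩ := exists_dvd_pow_mul_sub_coe hx hspan hc hβ r
  obtain ⟨a', ha'⟩ := exists_pow_mul_coe_eq hx hspan hindep hd hc hβ k a
  have ha'0 : a' ≠ 0 := by
    rintro rfl
    rw [ZeroMemClass.coe_zero, zero_mul] at ha'
    exact mul_ne_zero (pow_ne_zero k (ZeroMemClass.coe_eq_zero.not.2 hd))
      (ZeroMemClass.coe_eq_zero.not.2 ha) ha'
  have hab : (d * x + e : R) ∣ ((a' * b : A) : R) := by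
    convert dvd_sub (dvd_mul_of_dvd_right_of_normal hβ h (d ^ k))
      (dvd_mul_of_dvd_right_of_normal hβ hk a') using 1
    rw [Subring.coe_mul, ← mul_assoc, ha']
    noncomm_ring
  have hb : b = 0 :=
    (mul_eq_zero.1 (eq_zero_of_dvd_coe hx hspan hindep hd hc hab)).resolve_left ha'0
  exact dvd_of_dvd_pow_mul hx hspan hindep hd hreg hβ k (by simpa [hb] using hk)

lemma dvd_or_dvd_of_dvd_mul {r s : R} (h : (d * x + e : R) ∣ r * s) :
    (d * x + e : R) ∣ r ∨ (d * x + e : R) ∣ s := by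
  have hc := coe_mul_pow_one_sub_mem_degLT (x := x) (d := d) (e := e)
  obtain ⟨k, b, hk⟩ := exists_dvd_pow_mul_sub_coe hx hspan hc hβ r
  by_cases hb : b = 0
  · exact .inl (dvd_of_dvd_pow_mul hx hspan hindep hd hreg hβ k (by simpa [hb] using hk))
  · refine .inr (dvd_of_dvd_coe_mul hx hspan hindep hd hreg hβ hb ?_)
    convert dvd_sub (dvd_mul_of_dvd_right_of_normal hβ h (d ^ k)) (hk.mul_right s) using 1
    noncomm_ring

end CompletelyPrime

end OreExtension

open OreExtension in
theorem jordan_domain_theorem_general {R : Type*} [Ring R] [IsDomain R]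
    (A : Subring R) (σ : A ≃+* A) (δ : A →+ A)
    (x : R) (hx : ∀ a : A, x * a = (σ a : R) * x + (δ a : R))
    (hspan : ∀ r : R, ∃ (N : ℕ) (c : Fin N → A), r = ∑ i, (c i : R) * x ^ (i : ℕ))
    (hindep : ∀ (N : ℕ) (c : Fin N → A),
      (∑ i : Fin N, (c i : R) * x ^ (i : ℕ)) = 0 → ∀ i, c i = 0)
    (d e : A) (hd : d ≠ 0)
    (β : R ≃+* R) (hβ : ∀ r : R, ((d : R) * x + (e : R)) * r = β r * ((d : R) * x + (e : R))) :
    (∀ a : A, β (a : R) ∈ A) ∧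
    (∀ a : A, ∃ b : A, β (b : R) = (a : R)) ∧
    (∀ a : A, ∃ b : A, (a : R) * (d : R) = (d : R) * (b : R)) ∧
    (∀ a : A, ∃ b : A, (d : R) * (a : R) = (b : R) * (d : R)) ∧
    (∀ a : A, β (a : R) * (d : R) = (d : R) * (σ a : R)) ∧
    ((∀ a : A, ((∃ b : A, e * a = d * b) → ∃ b : A, a = d * b) ∧
        ((∃ b : A, a * e = d * b) → ∃ b : A, a = d * b)) →
      (¬ ∃ v : R, (1 : R) = v * ((d : R) * x + (e : R))) ∧
      ∀ r s : R, (∃ v : R, r * s = v * ((d : R) * x + (e : R))) →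
        (∃ v : R, r = v * ((d : R) * x + (e : R))) ∨
        (∃ v : R, s = v * ((d : R) * x + (e : R)))) := by
  have hc := coe_mul_pow_one_sub_mem_degLT (x := x) (d := d) (e := e)
  refine ⟨apply_coe_mem hx hspan hindep hd hc hβ, exists_apply_coe_eq hx hspan hindep hd hc hβ,
    exists_mul_coe_eq hx hspan hindep hd hc hβ, exists_coe_mul_eq hx hspan hindep hd hc hβ,
    apply_coe_mul_eq hx hspan hindep hd hc hβ, fun hreg => ⟨?_, ?_⟩⟩
  · rw [exists_eq_mul_iff_dvd_of_normal hβ]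
    exact not_dvd_one hx hspan hindep hd hc
  · simp only [exists_eq_mul_iff_dvd_of_normal hβ]
    exact fun r s => dvd_or_dvd_of_dvd_mul hx hspan hindep hd (fun a => (hreg a).1) hβ

/-- Jordan's theorem for Ore extensions `R = A[x; σ, δ]`: if `c = dx + e` (`d ≠ 0`) is a
normal element of `R` with associated automorphism `β`, then `β(A) = A`, `d` is normal in
`A` with `β(a)d = dσ(a)`; moreover if `e` is regular modulo `dA = Ad` then `R/Rc` is a
domain (i.e. `Rc` is a proper completely prime ideal). -/
theorem jordan_domain_theorem {R : Type*} [Ring R] [IsDomain R]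
    (A : Subring R) (σ : A ≃+* A) (δ : A →+ A)
    (hδ : ∀ a b : A, δ (a * b) = σ a * δ b + δ a * b)
    (x : R) (hx : ∀ a : A, x * a = (σ a : R) * x + (δ a : R))
    (hspan : ∀ r : R, ∃ (N : ℕ) (c : Fin N → A), r = ∑ i, (c i : R) * x ^ (i : ℕ))
    (hindep : ∀ (N : ℕ) (c : Fin N → A),
      (∑ i : Fin N, (c i : R) * x ^ (i : ℕ)) = 0 → ∀ i, c i = 0)
    (d e : A) (hd : d ≠ 0)
    (β : R ≃+* R) (hβ : ∀ r : R, ((d : R) * x + (e : R)) * r = β r * ((d : R) * x + (e : R))) :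
    (∀ a : A, β (a : R) ∈ A) ∧
    (∀ a : A, ∃ b : A, β (b : R) = (a : R)) ∧
    (∀ a : A, ∃ b : A, (a : R) * (d : R) = (d : R) * (b : R)) ∧
    (∀ a : A, ∃ b : A, (d : R) * (a : R) = (b : R) * (d : R)) ∧
    (∀ a : A, β (a : R) * (d : R) = (d : R) * (σ a : R)) ∧
    ((∀ a : A, ((∃ b : A, e * a = d * b) → ∃ b : A, a = d * b) ∧
        ((∃ b : A, a * e = d * b) → ∃ b : A, a = d * b)) →
      (¬ ∃ v : R, (1 : R) = v * ((d : R) * x + (e : R))) ∧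
      ∀ r s : R, (∃ v : R, r * s = v * ((d : R) * x + (e : R))) →
        (∃ v : R, r = v * ((d : R) * x + (e : R))) ∨
        (∃ v : R, s = v * ((d : R) * x + (e : R)))) :=
  jordan_domain_theorem_general A σ δ x hx hspan hindep d e hd β hβ
end
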